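/- arXiv:2301.06806 — 10 statements merged into one kernel-verified Lean document; each statement's English description precedes it below -/
import Mathlib

section
/- There exist a real number α > 0, a convex, twice continuously differentiable function f : ℝ → ℝ whose derivative is Lipschitz and whose second derivative is Lipschitz, and a differentiable function z : ℝ → ℝ satisfying the fixed-point equation z(x) = x − α·f'(z(x)) for every x ∈ ℝ, such that the iMAML meta-objective φ(x) = f(z(x)) is not convex on ℝ. -/
namespace IMAML

noncomputable def F (w : ℝ) : ℝ := w^2/2 + (w * Real.sqrt (w^2+1) + Real.arsinh w)/2
noncomputable def Z (x : ℝ) : ℝ := (13*x - 12*Real.sqrt (x^2+25))/25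

lemma sc_pos (c w : ℝ) (hc : 0 < c) : 0 < Real.sqrt (w^2+c) :=
  Real.sqrt_pos.2 (by positivity)

lemma sc_sq (c w : ℝ) (hc : 0 ≤ c) : Real.sqrt (w^2+c)^2 = w^2+c :=
  Real.sq_sqrt (by positivity)

lemma abs_lt_s1 (w : ℝ) : |w| < Real.sqrt (w^2+1) := by
  have h := Real.sqrt_lt_sqrt (sq_nonneg w) (by linarith : w^2 < w^2+1)
  rwa [Real.sqrt_sq_eq_abs] at h

lemma hasDerivAt_S (c w : ℝ) (hc : 0 < c) :
    HasDerivAt (fun w => Real.sqrt (w^2+c)) (w / Real.sqrt (w^2+c)) w := by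
  have h0 : HasDerivAt (fun w : ℝ => w^2+c) (2*w) w := by
    simpa using (hasDerivAt_pow 2 w).add_const c
  have h := h0.sqrt (by positivity)
  convert h using 1
  have hs := sc_pos c w hc
  field_simp

lemma hasDerivAt_F (w : ℝ) :
    HasDerivAt F (w + Real.sqrt (w^2+1)) w := by
  have hs := sc_pos 1 w one_pos
  have hsq := sc_sq 1 w zero_le_one
  have h1 : HasDerivAt (fun w : ℝ => w^2/2) w w := by
    simpa using (hasDerivAt_pow 2 w).div_const 2
  have h2 : HasDerivAt (fun w : ℝ => w * Real.sqrt (w^2+1))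
      (1 * Real.sqrt (w^2+1) + w * (w / Real.sqrt (w^2+1))) w :=
    (hasDerivAt_id w).mul (hasDerivAt_S 1 w one_pos)
  have h3 : HasDerivAt Real.arsinh (Real.sqrt (1+w^2))⁻¹ w := Real.hasDerivAt_arsinh w
  have h := h1.add ((h2.add h3).div_const 2)
  refine h.congr_deriv ?_
  symm
  rw [add_comm (1:ℝ) (w^2)]
  field_simp
  nlinarith [hs, hsq]

lemma hasDerivAt_F2 (w : ℝ) :
    HasDerivAt (fun w : ℝ => w + Real.sqrt (w^2+1)) (1 + w / Real.sqrt (w^2+1)) w :=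
  (hasDerivAt_id w).add (hasDerivAt_S 1 w one_pos)

lemma deriv_F : deriv F = fun w => w + Real.sqrt (w^2+1) :=
  funext fun w => (hasDerivAt_F w).deriv

lemma hasDerivAt_F3 (w : ℝ) :
    HasDerivAt (fun w : ℝ => 1 + w / Real.sqrt (w^2+1))
      ((1 * Real.sqrt (w^2+1) - w * (w / Real.sqrt (w^2+1))) / (Real.sqrt (w^2+1))^2) w := by
  have h := (hasDerivAt_const w (1:ℝ)).add
    ((hasDerivAt_id w).div (hasDerivAt_S 1 w one_pos) (ne_of_gt (sc_pos 1 w one_pos)))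
  exact h.congr_deriv (by simp)


lemma diff_F : Differentiable ℝ F := fun w => (hasDerivAt_F w).differentiableAt

lemma mono_F' : Monotone (fun w => w + Real.sqrt (w^2+1)) := by
  intro a b hab
  have hsa := sc_pos 1 a one_pos
  have hsb := sc_pos 1 b one_pos
  have hqa := sc_sq 1 a zero_le_one
  have hqb := sc_sq 1 b zero_le_one
  have haa := abs_lt_s1 a
  have hbb := abs_lt_s1 b
  simp only
  nlinarith [sq_nonneg (Real.sqrt (a^2+1) - Real.sqrt (b^2+1)),
    (neg_le_abs a).trans_lt haa, (neg_le_abs b).trans_lt hbb]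

lemma convex_F : ConvexOn ℝ Set.univ F := by
  have := Monotone.convexOn_univ_of_deriv diff_F (by rw [deriv_F]; exact mono_F')
  simpa using this

lemma contDiff_F : ContDiff ℝ 2 F := by
  have hsqrt : ContDiff ℝ 2 (fun w : ℝ => Real.sqrt (w^2+1)) := by
    rw [contDiff_iff_contDiffAt]
    intro w
    exact (((contDiff_id.pow 2).add contDiff_const).contDiffAt).sqrt (by positivity)
  have h1 : ContDiff ℝ 2 (fun w : ℝ => w^2/2) := (contDiff_id.pow 2).div_const 2
  have h2 : ContDiff ℝ 2 (fun w : ℝ => w * Real.sqrt (w^2+1)) := contDiff_id.mul hsqrt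
  have h3 : ContDiff ℝ 2 Real.arsinh := Real.contDiff_arsinh
  exact h1.add ((h2.add h3).div_const 2)

lemma nnnorm_le_of_abs {r : ℝ} {c : NNReal} (h : |r| ≤ (c:ℝ)) : ‖r‖₊ ≤ c := by
  rw [← NNReal.coe_le_coe, coe_nnnorm, Real.norm_eq_abs]
  exact h

lemma lip_derivF : LipschitzWith 2 (deriv F) := by
  rw [deriv_F]
  apply lipschitzWith_of_nnnorm_deriv_le (fun w => (hasDerivAt_F2 w).differentiableAt)
  intro w
  rw [(hasDerivAt_F2 w).deriv]
  apply nnnorm_le_of_abs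
  have hs := sc_pos 1 w one_pos
  have ha := abs_lt_s1 w
  have h1 : |w / Real.sqrt (w^2+1)| ≤ 1 := by
    rw [abs_div, abs_of_pos hs]
    exact div_le_one_of_le₀ ha.le hs.le
  rw [abs_le] at h1 ⊢
  push_cast
  constructor <;> linarith [h1.1, h1.2]

lemma lip_derivF2 : LipschitzWith 1 (deriv (deriv F)) := by
  have hd : deriv (deriv F) = fun w : ℝ => 1 + w / Real.sqrt (w^2+1) := by
    rw [deriv_F]; funext w; exact (hasDerivAt_F2 w).deriv
  rw [hd]
  apply lipschitzWith_of_nnnorm_deriv_le (fun w => (hasDerivAt_F3 w).differentiableAt)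
  intro w
  rw [(hasDerivAt_F3 w).deriv]
  apply nnnorm_le_of_abs
  have hs := sc_pos 1 w one_pos
  have hsq := sc_sq 1 w zero_le_one
  have hs1 : 1 ≤ Real.sqrt (w^2+1) := by nlinarith
  have hval : (1 * Real.sqrt (w^2+1) - w * (w / Real.sqrt (w^2+1))) / (Real.sqrt (w^2+1))^2
      = 1 / (Real.sqrt (w^2+1))^3 := by
    field_simp
    nlinarith
  rw [hval, abs_of_pos (by positivity)]
  push_cast
  rw [div_le_one (by positivity)]
  nlinarith


lemma hasDerivAt_Z (x : ℝ) :
    HasDerivAt Z ((13 - 12 * (x / Real.sqrt (x^2+25)))/25) x := by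
  have h := (((hasDerivAt_id x).const_mul 13).sub
    ((hasDerivAt_S 25 x (by norm_num)).const_mul 12)).div_const 25
  exact h.congr_deriv (by ring)

lemma diff_Z : Differentiable ℝ Z := fun x => (hasDerivAt_Z x).differentiableAt

lemma sqrtZ (x : ℝ) :
    Real.sqrt ((Z x)^2 + 1) = (13 * Real.sqrt (x^2+25) - 12*x)/25 := by
  have hs := sc_pos 25 x (by norm_num)
  have hsq := sc_sq 25 x (by norm_num)
  have hax : |x| < Real.sqrt (x^2+25) := by
    have h := Real.sqrt_lt_sqrt (sq_nonneg x) (by linarith : x^2 < x^2+25)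
    rwa [Real.sqrt_sq_eq_abs] at h
  have hpos : 0 ≤ (13 * Real.sqrt (x^2+25) - 12*x)/25 := by
    have : x ≤ |x| := le_abs_self x
    nlinarith
  have h1 : (Z x)^2 + 1 = ((13 * Real.sqrt (x^2+25) - 12*x)/25)^2 := by
    unfold Z
    field_simp
    nlinarith
  rw [h1, Real.sqrt_sq hpos]

lemma fixed_point (x : ℝ) : Z x = x - 12 * deriv F (Z x) := by
  rw [deriv_F]
  simp only
  rw [sqrtZ x]
  unfold Z
  ring

lemma hasDerivAt_phi (x : ℝ) :
    HasDerivAt (fun x => F (Z x)) ((x + (x^2+325)/Real.sqrt (x^2+25))/625) x := by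
  have h := (hasDerivAt_F (Z x)).comp x (hasDerivAt_Z x)
  refine h.congr_deriv ?_
  symm
  rw [sqrtZ x]
  have hs := sc_pos 25 x (by norm_num)
  have hsq := sc_sq 25 x (by norm_num)
  unfold Z
  field_simp
  nlinarith

lemma not_convex_phi : ¬ ConvexOn ℝ Set.univ (fun x => F (Z x)) := by
  intro h
  have d5 := hasDerivAt_phi 5
  have d8 := hasDerivAt_phi 8
  have h1 := h.le_slope_of_hasDerivAt (Set.mem_univ (5:ℝ)) (Set.mem_univ (8:ℝ))
    (by norm_num) d5
  have h2 := h.slope_le_of_hasDerivAt (Set.mem_univ (5:ℝ)) (Set.mem_univ (8:ℝ))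
    (by norm_num) d8
  have h3 := h1.trans h2
  have e5 : ((5:ℝ)^2 + 25) = 50 := by norm_num
  have e8 : ((8:ℝ)^2 + 25) = 89 := by norm_num
  rw [e5, e8] at h3
  have hs5 : Real.sqrt 50 ^ 2 = 50 := Real.sq_sqrt (by norm_num)
  have hs8 : Real.sqrt 89 ^ 2 = 89 := Real.sq_sqrt (by norm_num)
  have hp5 : 0 < Real.sqrt 50 := Real.sqrt_pos.2 (by norm_num)
  have hp8 : 0 < Real.sqrt 89 := Real.sqrt_pos.2 (by norm_num)
  have hb5 : Real.sqrt 50 < 7.072 := by nlinarith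
  have hb5' : (7.07:ℝ) < Real.sqrt 50 := by nlinarith
  have hb8 : Real.sqrt 89 < 9.434 := by nlinarith
  have hb8' : (9.43:ℝ) < Real.sqrt 89 := by nlinarith
  norm_num at h3
  have h4 : 5 + 350 / Real.sqrt 50 ≤ 8 + 389 / Real.sqrt 89 := by linarith
  field_simp at h4
  nlinarith [mul_pos hp5 hp8, mul_lt_mul_of_pos_left hb8 hp5]

end IMAML


/-- There exist α > 0, a convex, twice continuously differentiable
function f : ℝ → ℝ whose derivative and second derivative are Lipschitz, and a
differentiable function z : ℝ → ℝ satisfying z(x) = x − α·f'(z(x)) for all x,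
such that the iMAML meta-objective φ(x) = f(z(x)) is not convex on ℝ. -/
theorem imaml_objective_nonconvex :
    ∃ (α : ℝ) (f z : ℝ → ℝ),
      0 < α ∧
      ConvexOn ℝ Set.univ f ∧
      ContDiff ℝ 2 f ∧
      (∃ K : NNReal, LipschitzWith K (deriv f)) ∧
      (∃ K : NNReal, LipschitzWith K (deriv (deriv f))) ∧
      Differentiable ℝ z ∧
      (∀ x : ℝ, z x = x - α * deriv f (z x)) ∧
      ¬ ConvexOn ℝ Set.univ (fun x => f (z x)) := by
  exact ⟨12, IMAML.F, IMAML.Z, by norm_num, IMAML.convex_F, IMAML.contDiff_F,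
    ⟨2, IMAML.lip_derivF⟩, ⟨1, IMAML.lip_derivF2⟩, IMAML.diff_Z,
    IMAML.fixed_point, IMAML.not_convex_phi⟩
end

section
/- Let f(x) = x²/2 + cos(x) and fix any α > 0. Let z : ℝ → ℝ be the function determined uniquely by the equation (1+α)·z(x) − α·sin(z(x)) = x for all x (equivalently, z(x) = x − α f'(z(x))). Then the iMAML meta-objective φ(x) = f(z(x)) is not L-smooth for any L ≥ 0: for every L ≥ 0 there exist x, y ∈ ℝ with |φ'(x) − φ'(y)| > L·|x − y|. (Here f is convex, its derivative f'(x) = x − sin x is 2-Lipschitz, and its second derivative f''(x) = 1 − cos x is 1-Lipschitz.) -/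
/-- For f(x) = x²/2 + cos x and any α > 0, with z : ℝ → ℝ satisfying
(1+α)·z(x) − α·sin(z(x)) = x for all x (equivalently z(x) = x − α f'(z(x))),
the iMAML meta-objective φ(x) = f(z(x)) is not L-smooth for any L ≥ 0:
for every L ≥ 0 there exist x, y with |φ'(x) − φ'(y)| > L·|x − y|. -/
theorem imaml_objective_nonsmooth (α : ℝ) (hα : 0 < α) (z : ℝ → ℝ)
    (hz : ∀ x : ℝ, (1 + α) * z x - α * Real.sin (z x) = x) :
    ∀ L : ℝ, 0 ≤ L → ∃ x y : ℝ,
      L * |x - y| <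
        |deriv (fun t => (z t) ^ 2 / 2 + Real.cos (z t)) x -
          deriv (fun t => (z t) ^ 2 / 2 + Real.cos (z t)) y| := by
  intro L hL
  set g : ℝ → ℝ := fun t => (1 + α) * t - α * Real.sin t with hgdef
  have hgz : ∀ x, g (z x) = x := hz
  -- derivative of g
  have hgd : ∀ t : ℝ, HasDerivAt g (1 + α - α * Real.cos t) t := by
    intro t
    have h1 : HasDerivAt (fun t : ℝ => (1 + α) * t) ((1 + α) * 1) t :=
      (hasDerivAt_id t).const_mul (1 + α)
    have h2 : HasDerivAt (fun t : ℝ => α * Real.sin t) (α * Real.cos t) t :=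
      (Real.hasDerivAt_sin t).const_mul α
    exact (h1.sub h2).congr_deriv (by ring)
  have hgd_pos : ∀ t : ℝ, 0 < 1 + α - α * Real.cos t := by
    intro t
    nlinarith [Real.cos_le_one t, Real.neg_one_le_cos t]
  -- g is strictly monotone
  have hmono : StrictMono g := by
    apply strictMono_of_deriv_pos
    intro t
    rw [(hgd t).deriv]
    exact hgd_pos t
  have hsurj : Function.Surjective g := fun x => ⟨z x, hgz x⟩
  -- z is continuous, being the inverse of the order isomorphism g
  have hzeq : ∀ x, z x = (StrictMono.orderIsoOfSurjective g hmono hsurj).symm x := by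
    intro x
    apply hmono.injective
    rw [hgz x]
    have := (StrictMono.orderIsoOfSurjective g hmono hsurj).apply_symm_apply x
    rw [StrictMono.coe_orderIsoOfSurjective] at this
    exact this.symm
  have hzcont : Continuous z := by
    have : z = fun x => (StrictMono.orderIsoOfSurjective g hmono hsurj).symm x :=
      funext hzeq
    rw [this]
    exact ((StrictMono.orderIsoOfSurjective g hmono hsurj).symm.toHomeomorph).continuous
  -- z has derivative (g' (z x))⁻¹
  have hzd : ∀ x : ℝ, HasDerivAt z (1 + α - α * Real.cos (z x))⁻¹ x := by
    intro x
    exact HasDerivAt.of_local_left_inverse hzcont.continuousAt (hgd (z x))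
      (ne_of_gt (hgd_pos (z x))) (Filter.Eventually.of_forall hgz)
  -- derivative of φ
  have hphid : ∀ x : ℝ,
      deriv (fun t => (z t) ^ 2 / 2 + Real.cos (z t)) x
        = (z x - Real.sin (z x)) * (1 + α - α * Real.cos (z x))⁻¹ := by
    intro x
    have hf : HasDerivAt (fun w : ℝ => w ^ 2 / 2 + Real.cos w) (z x - Real.sin (z x)) (z x) := by
      have h1 : HasDerivAt (fun w : ℝ => w ^ 2 / 2)
          (((2 : ℕ) : ℝ) * (z x) ^ (2 - 1) / 2) (z x) := (hasDerivAt_pow 2 (z x)).div_const 2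
      have h2 : HasDerivAt Real.cos (-Real.sin (z x)) (z x) := Real.hasDerivAt_cos (z x)
      have h3 := h1.add h2
      norm_num at h3
      rw [sub_eq_add_neg]
      exact h3
    have : HasDerivAt (fun t => (z t) ^ 2 / 2 + Real.cos (z t))
        ((z x - Real.sin (z x)) * (1 + α - α * Real.cos (z x))⁻¹) x := hf.comp x (hzd x)
    exact this.deriv
  -- choose n large
  have hπ : (0 : ℝ) < Real.pi := Real.pi_pos
  obtain ⟨n, hn⟩ := exists_nat_gt ((L * (1 + α) * (1 + 2 * α) + 1) / (4 * α))
  -- the two points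
  set w₁ : ℝ := (n : ℝ) * (2 * Real.pi) with hw1
  set w₂ : ℝ := (n : ℝ) * (2 * Real.pi) + Real.pi with hw2
  have hsin1 : Real.sin w₁ = 0 := by
    have : w₁ = ((2 * n : ℕ) : ℝ) * Real.pi := by push_cast [hw1]; ring
    rw [this, Real.sin_nat_mul_pi]
  have hsin2 : Real.sin w₂ = 0 := by
    have : w₂ = ((2 * n + 1 : ℕ) : ℝ) * Real.pi := by push_cast [hw2]; ring
    rw [this, Real.sin_nat_mul_pi]
  have hcos1 : Real.cos w₁ = 1 := Real.cos_nat_mul_two_pi n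
  have hcos2 : Real.cos w₂ = -1 := Real.cos_nat_mul_two_pi_add_pi n
  refine ⟨g w₁, g w₂, ?_⟩
  have hz1 : z (g w₁) = w₁ := hmono.injective (hgz (g w₁))
  have hz2 : z (g w₂) = w₂ := hmono.injective (hgz (g w₂))
  rw [hphid, hphid, hz1, hz2, hsin1, hsin2, hcos1, hcos2]
  have hxy : g w₁ - g w₂ = -((1 + α) * Real.pi) := by
    simp only [hgdef, hsin1, hsin2]
    rw [hw2, hw1]
    ring
  rw [hxy, abs_neg, abs_of_pos (by positivity)]
  have hval : (w₁ - 0) * (1 + α - α * 1)⁻¹ - (w₂ - 0) * (1 + α - α * (-1))⁻¹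
      = ((4 * α * n - 1) * Real.pi) / (1 + 2 * α) := by
    have h12 : (1 : ℝ) + 2 * α ≠ 0 := by positivity
    have e1 : (1 + α - α * 1) = 1 := by ring
    have e2 : 1 + α - α * (-1) = 1 + 2 * α := by ring
    rw [e1, e2, inv_one, mul_one, hw1, hw2]
    field_simp
    ring
  rw [hval]
  have hnum : L * (1 + α) * (1 + 2 * α) + 1 < 4 * α * n := by
    have h4α : (0:ℝ) < 4 * α := by positivity
    calc L * (1 + α) * (1 + 2 * α) + 1
        = ((L * (1 + α) * (1 + 2 * α) + 1) / (4 * α)) * (4 * α) := by field_simp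
      _ < (n : ℝ) * (4 * α) := by exact mul_lt_mul_of_pos_right hn h4α
      _ = 4 * α * n := by ring
  have hpos : 0 < ((4 * α * n - 1) * Real.pi) / (1 + 2 * α) := by
    apply div_pos
    · apply mul_pos _ hπ
      nlinarith [mul_nonneg (mul_nonneg hL (by linarith : (0:ℝ) ≤ 1 + α))
        (by linarith : (0:ℝ) ≤ 1 + 2 * α)]
    · positivity
  rw [abs_of_pos hpos]
  rw [lt_div_iff₀ (by positivity : (0:ℝ) < 1 + 2 * α)]
  nlinarith [mul_lt_mul_of_pos_left hnum hπ]
end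

section
/- Let f : ℝ^d → ℝ be convex and continuous, let α > 0, and suppose z : ℝ^d → ℝ^d is such that for every x, z(x) is a minimizer of w ↦ f(w) + ‖w − x‖²/(2α). Then the Moreau envelope F(x) = f(z(x)) + ‖z(x) − x‖²/(2α) is differentiable on ℝ^d with gradient ∇F(x) = (x − z(x))/α, and ∇F is (1/α)-Lipschitz: ‖∇F(x) − ∇F(y)‖ ≤ (1/α)‖x − y‖ for all x, y ∈ ℝ^d. -/
open scoped RealInnerProductSpace

theorem moreau_subgrad {d : ℕ} (f : EuclideanSpace ℝ (Fin d) → ℝ) (α : ℝ) (hα : 0 < α)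
    (hconv : ConvexOn ℝ Set.univ f)
    (z : EuclideanSpace ℝ (Fin d) → EuclideanSpace ℝ (Fin d))
    (hz : ∀ x, IsMinOn (fun w => f w + ‖w - x‖ ^ 2 / (2 * α)) Set.univ (z x))
    (x w : EuclideanSpace ℝ (Fin d)) :
    ⟪x - z x, w - z x⟫ ≤ α * (f w - f (z x)) := by
  have key : ∀ t ∈ Set.Ioc (0:ℝ) 1,
      ⟪x - z x, w - z x⟫ ≤ α * (f w - f (z x)) + t * (‖w - z x‖ ^ 2 / 2) := by
    intro t ht
    obtain ⟨ht0, ht1⟩ := ht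
    set zt := z x + t • (w - z x) with hzt
    have hpt : (1 - t) • z x + t • w = zt := by rw [hzt]; module
    have hcvx : f zt ≤ (1 - t) * f (z x) + t * f w := by
      have := hconv.2 (Set.mem_univ (z x)) (Set.mem_univ w)
        (by linarith : (0:ℝ) ≤ 1 - t) (le_of_lt ht0) (by ring)
      rwa [hpt] at this
    have hmin' : f (z x) + ‖z x - x‖ ^ 2 / (2 * α) ≤ f zt + ‖zt - x‖ ^ 2 / (2 * α) :=
      hz x (Set.mem_univ zt)
    have hnorm : ‖zt - x‖ ^ 2 = ‖z x - x‖ ^ 2 + 2 * t * ⟪z x - x, w - z x⟫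
        + t ^ 2 * ‖w - z x‖ ^ 2 := by
      have h1 : zt - x = (z x - x) + t • (w - z x) := by rw [hzt]; abel
      rw [h1, norm_add_sq_real, real_inner_smul_right, norm_smul]
      simp [abs_of_pos ht0]
      ring
    have h2α : (0:ℝ) < 2 * α := by positivity
    have hm2 : 2*α*f (z x) + ‖z x - x‖^2 ≤ 2*α*f zt + ‖zt - x‖^2 := by
      calc 2*α*f (z x) + ‖z x - x‖^2 = (2*α) * (f (z x) + ‖z x - x‖^2/(2*α)) := by
            field_simp
        _ ≤ (2*α) * (f zt + ‖zt - x‖^2/(2*α)) :=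
            mul_le_mul_of_nonneg_left hmin' h2α.le
        _ = 2*α*f zt + ‖zt - x‖^2 := by field_simp
    have hcvx2 : 2*α*f zt ≤ 2*α*((1-t)*f (z x) + t*f w) :=
      mul_le_mul_of_nonneg_left hcvx h2α.le
    have hinner : ⟪z x - x, w - z x⟫ = - ⟪x - z x, w - z x⟫ := by
      rw [← inner_neg_left]; simp
    have R : 2*t*⟪x - z x, w - z x⟫ ≤ 2*α*t*(f w - f (z x)) + t^2 * ‖w - z x‖^2 := by
      nlinarith [hm2, hcvx2, hnorm, hinner]
    nlinarith [R, ht0, mul_pos ht0 ht0]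
  by_contra h
  push_neg at h
  rcases eq_or_lt_of_le (norm_nonneg (w - z x)) with hn | hn
  · have h1 := key 1 ⟨one_pos, le_refl 1⟩
    have h2 : ‖w - z x‖^2 = 0 := by rw [← hn]; ring
    linarith
  · set ε := ⟪x - z x, w - z x⟫ - α * (f w - f (z x)) with hε
    have hε0 : 0 < ε := by linarith
    set t := min 1 (ε / (‖w - z x‖ ^ 2 / 2) / 2) with htdef
    have hden : 0 < ‖w - z x‖ ^ 2 / 2 := by positivity
    have ht0 : 0 < t := lt_min one_pos (by positivity)
    have hk := key t ⟨ht0, min_le_left _ _⟩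
    have ht2 : t * (‖w - z x‖ ^ 2 / 2) ≤ ε / 2 := by
      have hle : t ≤ ε / (‖w - z x‖ ^ 2 / 2) / 2 := min_le_right _ _
      calc t * (‖w - z x‖ ^ 2 / 2) ≤ (ε / (‖w - z x‖ ^ 2 / 2) / 2) * (‖w - z x‖ ^ 2 / 2) :=
            mul_le_mul_of_nonneg_right hle (le_of_lt hden)
        _ = ε / 2 := by field_simp
    linarith

theorem moreau_firm {d : ℕ} (f : EuclideanSpace ℝ (Fin d) → ℝ) (α : ℝ) (hα : 0 < α)
    (hconv : ConvexOn ℝ Set.univ f)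
    (z : EuclideanSpace ℝ (Fin d) → EuclideanSpace ℝ (Fin d))
    (hz : ∀ x, IsMinOn (fun w => f w + ‖w - x‖ ^ 2 / (2 * α)) Set.univ (z x))
    (x y : EuclideanSpace ℝ (Fin d)) :
    ‖(x - z x) - (y - z y)‖ ≤ ‖x - y‖ := by
  have h1 := moreau_subgrad f α hα hconv z hz x (z y)
  have h2 := moreau_subgrad f α hα hconv z hz y (z x)
  set q := (x - z x) - (y - z y) with hq
  set u := x - y with hu
  have e1 : z y - z x = q - u := by rw [hq, hu]; abel
  have e2 : z x - z y = u - q := by rw [hq, hu]; abel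
  rw [e1] at h1
  rw [e2] at h2
  have e3 : ⟪y - z y, u - q⟫ = -⟪y - z y, q - u⟫ := by
    rw [show u - q = -(q - u) by abel, inner_neg_right]
  have e4 : ⟪q, q - u⟫ = ⟪x - z x, q - u⟫ - ⟪y - z y, q - u⟫ := by
    rw [hq, inner_sub_left]
  have hsum : ⟪q, q - u⟫ ≤ 0 := by rw [e4]; linarith
  have e5 : ⟪q, q - u⟫ = ⟪q, q⟫ - ⟪q, u⟫ := inner_sub_right q q u
  have e6 : ⟪q, q⟫ = ‖q‖ ^ 2 := real_inner_self_eq_norm_sq q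
  have h5 : ‖q‖ ^ 2 ≤ ⟪q, u⟫ := by linarith [hsum, e5.ge, e5.le, e6.ge]
  have h6 : ⟪q, u⟫ ≤ ‖q‖ * ‖u‖ := real_inner_le_norm q u
  nlinarith [norm_nonneg q, norm_nonneg u]

/-- For convex continuous f : ℝ^d → ℝ, α > 0, and z(x) a minimizer of
w ↦ f(w) + ‖w − x‖²/(2α), the Moreau envelope F(x) = f(z(x)) + ‖z(x) − x‖²/(2α)
is differentiable with ∇F(x) = (x − z(x))/α, and ∇F is (1/α)-Lipschitz. -/
theorem moreau_envelope_smooth_convex {d : ℕ}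
    (f : EuclideanSpace ℝ (Fin d) → ℝ) (α : ℝ) (hα : 0 < α)
    (hconv : ConvexOn ℝ Set.univ f) (hcont : Continuous f)
    (z : EuclideanSpace ℝ (Fin d) → EuclideanSpace ℝ (Fin d))
    (hz : ∀ x, IsMinOn (fun w => f w + ‖w - x‖ ^ 2 / (2 * α)) Set.univ (z x)) :
    (∀ x, HasGradientAt (fun x => f (z x) + ‖z x - x‖ ^ 2 / (2 * α))
        (α⁻¹ • (x - z x)) x) ∧
    (∀ x y, ‖α⁻¹ • (x - z x) - α⁻¹ • (y - z y)‖ ≤ (1 / α) * ‖x - y‖) := by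
  set F : EuclideanSpace ℝ (Fin d) → ℝ :=
    fun x => f (z x) + ‖z x - x‖ ^ 2 / (2 * α) with hF
  have hlip : ∀ x y, ‖α⁻¹ • (x - z x) - α⁻¹ • (y - z y)‖ ≤ (1 / α) * ‖x - y‖ := by
    intro x y
    rw [← smul_sub, norm_smul, Real.norm_eq_abs, abs_of_pos (inv_pos.mpr hα), one_div]
    exact mul_le_mul_of_nonneg_left (moreau_firm f α hα hconv z hz x y)
      (inv_pos.mpr hα).le
  refine ⟨?_, hlip⟩
  have h2α : (0:ℝ) < 2 * α := by positivity
  have hc2 : ∀ c r : ℝ, 2*α*(c + r/(2*α)) = 2*α*c + r := by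
    intro c r; field_simp
  have hup : ∀ x y, 2*α*(F y - F x) - 2*⟪x - z x, y - x⟫ ≤ ‖y - x‖^2 := by
    intro x y
    have hmin : F y ≤ f (z x) + ‖z x - y‖^2 / (2*α) := hz y (Set.mem_univ (z x))
    have hmul := mul_le_mul_of_nonneg_left hmin h2α.le
    rw [hc2, hc2] at hmul
    have hFy : 2*α*F y = 2*α*f (z y) + ‖z y - y‖^2 := hc2 _ _
    have hFx : 2*α*F x = 2*α*f (z x) + ‖z x - x‖^2 := hc2 _ _
    have hexp : ‖z x - y‖^2 = ‖z x - x‖^2 + 2*⟪z x - x, x - y⟫ + ‖x - y‖^2 := by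
      rw [show z x - y = (z x - x) + (x - y) by abel, norm_add_sq_real]
    have hin : ⟪z x - x, x - y⟫ = ⟪x - z x, y - x⟫ := by
      rw [show z x - x = -(x - z x) by abel, show x - y = -(y - x) by abel,
        inner_neg_neg]
    have hny : ‖x - y‖ = ‖y - x‖ := norm_sub_rev _ _
    rw [hexp, hin, hny] at hmul
    have hFmul : 2*α*(F y - F x) = 2*α*F y - 2*α*F x := by ring
    linarith [hFmul.le, hFmul.ge, hFx.le, hFx.ge]
  have hbig : ∀ x y, |2*α*(F y - F x) - 2*⟪x - z x, y - x⟫| ≤ 3 * ‖y - x‖^2 := by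
    intro x y
    rw [abs_le]
    have h1 := hup x y
    have h2 := hup y x
    have hin2 : ⟪y - z y, x - y⟫ = -⟪y - z y, y - x⟫ := by
      rw [show x - y = -(y - x) by abel, inner_neg_right]
    have hny : ‖x - y‖ = ‖y - x‖ := norm_sub_rev _ _
    rw [hin2, hny] at h2
    have hcs : -(‖(y - z y) - (x - z x)‖ * ‖y - x‖)
        ≤ ⟪(y - z y) - (x - z x), y - x⟫ :=
      neg_le_of_abs_le (abs_real_inner_le_norm _ _)
    have hfirm : ‖(y - z y) - (x - z x)‖ ≤ ‖y - x‖ := moreau_firm f α hα hconv z hz y x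
    have hmul : ‖(y - z y) - (x - z x)‖ * ‖y - x‖ ≤ ‖y - x‖ * ‖y - x‖ :=
      mul_le_mul_of_nonneg_right hfirm (norm_nonneg _)
    have hsplit : ⟪(y - z y) - (x - z x), y - x⟫
        = ⟪y - z y, y - x⟫ - ⟪x - z x, y - x⟫ := inner_sub_left _ _ _
    constructor
    · nlinarith [sq_nonneg ‖y - x‖]
    · nlinarith [sq_nonneg ‖y - x‖]
  intro x
  rw [hasGradientAt_iff_isLittleO, Asymptotics.isLittleO_iff]
  intro c hc
  have hδ : (0:ℝ) < c * (2*α) / 3 := by positivity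
  filter_upwards [Metric.ball_mem_nhds x hδ] with y hy
  rw [Metric.mem_ball, dist_eq_norm] at hy
  have heq : F y - F x - ⟪α⁻¹ • (x - z x), y - x⟫
      = (2*α*(F y - F x) - 2*⟪x - z x, y - x⟫) / (2*α) := by
    rw [real_inner_smul_left]
    field_simp
  rw [Real.norm_eq_abs, heq, abs_div, abs_of_pos h2α]
  rw [div_le_iff₀ h2α]
  have hb := hbig x y
  have hsq : ‖y - x‖^2 ≤ (c * (2*α) / 3) * ‖y - x‖ := by
    have : ‖y - x‖ * ‖y - x‖ ≤ (c * (2*α) / 3) * ‖y - x‖ :=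
      mul_le_mul_of_nonneg_right hy.le (norm_nonneg _)
    nlinarith [this]
  calc |2*α*(F y - F x) - 2*⟪x - z x, y - x⟫| ≤ 3 * ‖y - x‖^2 := hb
    _ ≤ 3 * ((c * (2*α) / 3) * ‖y - x‖) := by linarith
    _ = c * ‖y - x‖ * (2*α) := by ring
end

section
/- Let f : ℝ^d → ℝ be L-smooth (not necessarily convex), let 0 < α < 1/L, and suppose z : ℝ^d → ℝ^d satisfies the stationarity condition ∇f(z(x)) + (z(x) − x)/α = 0 for every x (as holds for any minimizer of the inner problem of the Moreau envelope). Then the gradient map G(x) := ∇f(z(x)) = (x − z(x))/α is L/(1 − αL)-Lipschitz: ‖G(x) − G(y)‖ ≤ (L/(1 − αL))·‖x − y‖ for all x, y. In particular, if α ≤ 1/(2L), then G is 2L-Lipschitz. -/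
/-- For an L-smooth (not necessarily convex) f : ℝ^d → ℝ, 0 < α < 1/L,
and z satisfying the stationarity condition ∇f(z(x)) + (z(x) − x)/α = 0, the map
G(x) = ∇f(z(x)) is L/(1 − αL)-Lipschitz; if moreover α ≤ 1/(2L), it is 2L-Lipschitz. -/
theorem moreau_gradient_lipschitz_nonconvex {d : ℕ}
    (f : EuclideanSpace ℝ (Fin d) → ℝ)
    (f' : EuclideanSpace ℝ (Fin d) → EuclideanSpace ℝ (Fin d))
    (L α : ℝ)
    (hgrad : ∀ x, HasGradientAt f (f' x) x)
    (hlip : ∀ x y, ‖f' x - f' y‖ ≤ L * ‖x - y‖)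
    (hα : 0 < α) (hαL : α < 1 / L)
    (z : EuclideanSpace ℝ (Fin d) → EuclideanSpace ℝ (Fin d))
    (hz : ∀ x, f' (z x) + α⁻¹ • (z x - x) = 0) :
    (∀ x y, ‖f' (z x) - f' (z y)‖ ≤ (L / (1 - α * L)) * ‖x - y‖) ∧
    (α ≤ 1 / (2 * L) → ∀ x y, ‖f' (z x) - f' (z y)‖ ≤ (2 * L) * ‖x - y‖) := by
  have hL : 0 < L := by
    have h1 : (0:ℝ) < 1 / L := lt_trans hα hαL
    exact one_div_pos.mp h1
  have hαL' : α * L < 1 := by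
    rw [lt_div_iff₀ hL] at hαL; linarith
  have hzx : ∀ x, z x - x = -(α • f' (z x)) := by
    intro x
    have h := hz x
    have h2 : α • f' (z x) + (z x - x) = 0 := by
      have h3 : α • (f' (z x) + α⁻¹ • (z x - x)) = α • (0 : EuclideanSpace ℝ (Fin d)) := by
        rw [h]
      rwa [smul_add, smul_smul, mul_inv_cancel₀ hα.ne', one_smul, smul_zero] at h3
    exact eq_neg_of_add_eq_zero_right h2
  have key : ∀ x y, ‖f' (z x) - f' (z y)‖ ≤ (L / (1 - α * L)) * ‖x - y‖ := by
    intro x y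
    set D := ‖f' (z x) - f' (z y)‖ with hD
    have h1 : D ≤ L * ‖z x - z y‖ := hlip _ _
    have h2 : z x - z y = (x - y) - α • (f' (z x) - f' (z y)) := by
      calc z x - z y = (z x - x) - (z y - y) + (x - y) := by abel
        _ = -(α • f' (z x)) - (-(α • f' (z y))) + (x - y) := by rw [hzx x, hzx y]
        _ = (x - y) - α • (f' (z x) - f' (z y)) := by rw [smul_sub]; abel
    have h3 : ‖z x - z y‖ ≤ ‖x - y‖ + α * D := by
      rw [h2]
      calc ‖(x - y) - α • (f' (z x) - f' (z y))‖
          ≤ ‖x - y‖ + ‖α • (f' (z x) - f' (z y))‖ := norm_sub_le _ _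
        _ = ‖x - y‖ + α * D := by rw [norm_smul, Real.norm_eq_abs, abs_of_pos hα]
    have h4 : D ≤ L * ‖x - y‖ + L * α * D := by nlinarith [norm_nonneg (z x - z y)]
    rw [div_mul_eq_mul_div, le_div_iff₀ (by linarith)]
    nlinarith
  refine ⟨key, fun hα2 x y => ?_⟩
  have h12 : (1:ℝ)/2 ≤ 1 - α * L := by
    have h' : 1/(2*L)*L = 1/2 := by field_simp
    have : α * L ≤ 1/(2*L) * L := mul_le_mul_of_nonneg_right hα2 hL.le
    rw [h'] at this
    linarith
  have hk := key x y
  have hle : L / (1 - α * L) ≤ 2 * L := by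
    rw [div_le_iff₀ (by linarith)]; nlinarith
  calc ‖f' (z x) - f' (z y)‖ ≤ (L / (1 - α * L)) * ‖x - y‖ := hk
    _ ≤ (2 * L) * ‖x - y‖ := mul_le_mul_of_nonneg_right hle (norm_nonneg _)
end

section
/- Let f : ℝ^d → ℝ be convex and L-smooth, let α > 0, and suppose z : ℝ^d → ℝ^d is such that for every x, z(x) is a minimizer of w ↦ f(w) + ‖w − x‖²/(2α). Then the Moreau envelope F(x) = f(z(x)) + ‖z(x) − x‖²/(2α) is differentiable with ∇F(x) = (x − z(x))/α = ∇f(z(x)), and ∇F is L/(1 + αL)-Lipschitz: ‖∇F(x) − ∇F(y)‖ ≤ (L/(1 + αL))·‖x − y‖ for all x, y; in particular, for any α > 0, F is L-smooth. -/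
open Set InnerProductSpace

variable {E : Type*} [NormedAddCommGroup E] [InnerProductSpace ℝ E] [CompleteSpace E]

local notation "⟪" x ", " y "⟫" => @inner ℝ _ _ x y

/-- derivative along a line -/
lemma line_hasDerivAt (f : E → ℝ) (f' : E → E) (hgrad : ∀ x, HasGradientAt f (f' x) x)
    (a b : E) (t : ℝ) :
    HasDerivAt (fun t : ℝ => f (a + t • (b - a))) ⟪f' (a + t • (b - a)), b - a⟫ t := by
  have hc : HasDerivAt (fun t : ℝ => a + t • (b - a)) (b - a) t := by
    simpa using ((hasDerivAt_id t).smul_const (b - a)).const_add a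
  have := (hgrad (a + t • (b - a))).hasFDerivAt.comp_hasDerivAt t hc
  simpa [InnerProductSpace.toDual_apply_apply, Function.comp_def] using this

/-- gradient inequality for convex functions -/
lemma grad_ineq (f : E → ℝ) (f' : E → E) (hconv : ConvexOn ℝ Set.univ f)
    (hgrad : ∀ x, HasGradientAt f (f' x) x) (a b : E) :
    ⟪f' a, b - a⟫ ≤ f b - f a := by
  have hg : ConvexOn ℝ Set.univ (fun t : ℝ => f (a + t • (b - a))) := by
    have := hconv.comp_affineMap (AffineMap.lineMap a b)
    simp only [Set.preimage_univ] at this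
    have e : (fun t : ℝ => f (a + t • (b - a))) = f ∘ AffineMap.lineMap a b := by
      funext t; simp [AffineMap.lineMap_apply, add_comm]
    rw [e]; exact this
  have h0 := line_hasDerivAt f f' hgrad a b 0
  have := hg.le_slope_of_hasDerivAt (mem_univ (0:ℝ)) (mem_univ (1:ℝ)) one_pos h0
  simp only [slope_def_field, zero_smul, add_zero, one_smul] at this ⊢
  have e1 : a + (b - a) = b := by abel
  rw [e1] at this
  linarith [this]

/-- descent lemma -/
lemma descent (f : E → ℝ) (f' : E → E) (L : ℝ)
    (hgrad : ∀ x, HasGradientAt f (f' x) x)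
    (hlip : ∀ x y, ‖f' x - f' y‖ ≤ L * ‖x - y‖) (a b : E) :
    f b ≤ f a + ⟪f' a, b - a⟫ + L / 2 * ‖b - a‖ ^ 2 := by
  set g : ℝ → ℝ := fun t => f (a + t • (b - a)) with hgdef
  set h : ℝ → ℝ := fun t =>
    f a + t * ⟪f' a, b - a⟫ + L / 2 * ‖b - a‖ ^ 2 * t ^ 2 - g t with hhdef
  have hd : ∀ t : ℝ, HasDerivAt h
      (⟪f' a, b - a⟫ + L * ‖b - a‖ ^ 2 * t - ⟪f' (a + t • (b - a)), b - a⟫) t := by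
    intro t
    have h1 : HasDerivAt (fun t : ℝ => f a + t * ⟪f' a, b - a⟫
        + L / 2 * ‖b - a‖ ^ 2 * t ^ 2)
        (⟪f' a, b - a⟫ + L * ‖b - a‖ ^ 2 * t) t := by
      have ha : HasDerivAt (fun t : ℝ => t * ⟪f' a, b - a⟫) ⟪f' a, b - a⟫ t := by
        simpa using (hasDerivAt_id t).mul_const ⟪f' a, b - a⟫
      have hb : HasDerivAt (fun t : ℝ => L / 2 * ‖b - a‖ ^ 2 * t ^ 2)
          (L * ‖b - a‖ ^ 2 * t) t := by
        have := (hasDerivAt_pow 2 t).const_mul (L / 2 * ‖b - a‖ ^ 2)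
        exact this.congr_deriv (by push_cast; ring)
      simpa [Pi.add_def] using (ha.const_add (f a)).add hb
    exact h1.sub (line_hasDerivAt f f' hgrad a b t)
  have hmono : MonotoneOn h (Icc (0:ℝ) 1) := by
    apply monotoneOn_of_deriv_nonneg (convex_Icc 0 1)
    · exact fun t _ => (hd t).differentiableAt.continuousAt.continuousWithinAt
    · intro t _; exact (hd t).differentiableAt.differentiableWithinAt
    · intro t ht
      rw [interior_Icc] at ht
      rw [(hd t).deriv]
      have hb : ‖f' (a + t • (b - a)) - f' a‖ ≤ L * (t * ‖b - a‖) := by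
        have := hlip (a + t • (b - a)) a
        simpa [norm_smul, abs_of_nonneg ht.1.le] using this
      have hbd : ⟪f' (a + t • (b - a)) - f' a, b - a⟫ ≤ L * t * ‖b - a‖ ^ 2 := by
        calc ⟪f' (a + t • (b - a)) - f' a, b - a⟫
            ≤ ‖f' (a + t • (b - a)) - f' a‖ * ‖b - a‖ := real_inner_le_norm _ _
          _ ≤ L * (t * ‖b - a‖) * ‖b - a‖ := by
              apply mul_le_mul_of_nonneg_right hb (norm_nonneg _)
          _ = L * t * ‖b - a‖ ^ 2 := by ring
      rw [inner_sub_left] at hbd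
      linarith
  have h01 := hmono (left_mem_Icc.mpr zero_le_one) (right_mem_Icc.mpr zero_le_one) zero_le_one
  have e0 : h 0 = 0 := by simp [hhdef, hgdef]
  have e1 : h 1 = f a + ⟪f' a, b - a⟫ + L / 2 * ‖b - a‖ ^ 2 - f b := by
    have : a + (1:ℝ) • (b - a) = b := by rw [one_smul]; abel
    simp [hhdef, hgdef, this]
  rw [e0, e1] at h01
  linarith

/-- one-sided key bound -/
lemma key_bound (f : E → ℝ) (f' : E → E) (L : ℝ) (hL : 0 < L)
    (hconv : ConvexOn ℝ Set.univ f)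
    (hgrad : ∀ x, HasGradientAt f (f' x) x)
    (hlip : ∀ x y, ‖f' x - f' y‖ ≤ L * ‖x - y‖) (x y : E) :
    1 / (2 * L) * ‖f' x - f' y‖ ^ 2 ≤ f x - f y - ⟪f' y, x - y⟫ := by
  set Δ := f' x - f' y with hΔ
  set p := x - L⁻¹ • Δ with hp
  have hdesc := descent f f' L hgrad hlip x p
  have hgi := grad_ineq f f' hconv hgrad y p
  have e1 : p - x = -(L⁻¹ • Δ) := by rw [hp]; abel
  have e2 : ⟪f' x, p - x⟫ = -(L⁻¹ * ⟪f' x, Δ⟫) := by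
    rw [e1, inner_neg_right, real_inner_smul_right]
  have e3 : ‖p - x‖ ^ 2 = L⁻¹ ^ 2 * ‖Δ‖ ^ 2 := by
    rw [e1, norm_neg, norm_smul, mul_pow]
    simp [abs_of_pos (inv_pos.mpr hL)]
  have e4 : ⟪f' y, p - y⟫ = ⟪f' y, x - y⟫ - L⁻¹ * ⟪f' y, Δ⟫ := by
    have : p - y = (x - y) - L⁻¹ • Δ := by rw [hp]; abel
    rw [this, inner_sub_right, real_inner_smul_right]
  have e5 : ⟪f' x, Δ⟫ - ⟪f' y, Δ⟫ = ‖Δ‖ ^ 2 := by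
    rw [← inner_sub_left, ← hΔ, real_inner_self_eq_norm_sq]
  rw [e2, e3] at hdesc
  rw [e4] at hgi
  have e6 : L⁻¹ * ⟪f' x, Δ⟫ - L⁻¹ * ⟪f' y, Δ⟫ = L⁻¹ * ‖Δ‖ ^ 2 := by
    rw [← mul_sub, e5]
  have c1 : L / 2 * (L⁻¹ ^ 2 * ‖Δ‖ ^ 2) = 1 / (2 * L) * ‖Δ‖ ^ 2 := by
    field_simp
  have c2 : L⁻¹ * ‖Δ‖ ^ 2 = 2 * (1 / (2 * L) * ‖Δ‖ ^ 2) := by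
    field_simp
  linarith

/-- cocoercivity -/
lemma coco (f : E → ℝ) (f' : E → E) (L : ℝ) (hL : 0 < L)
    (hconv : ConvexOn ℝ Set.univ f)
    (hgrad : ∀ x, HasGradientAt f (f' x) x)
    (hlip : ∀ x y, ‖f' x - f' y‖ ≤ L * ‖x - y‖) (x y : E) :
    L⁻¹ * ‖f' x - f' y‖ ^ 2 ≤ ⟪f' x - f' y, x - y⟫ := by
  have h1 := key_bound f f' L hL hconv hgrad hlip x y
  have h2 := key_bound f f' L hL hconv hgrad hlip y x
  have e1 : ‖f' y - f' x‖ = ‖f' x - f' y‖ := norm_sub_rev _ _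
  have e2 : ⟪f' x, y - x⟫ = -⟪f' x, x - y⟫ := by
    rw [← inner_neg_right]; congr 1; abel
  rw [e1, e2] at h2
  have e3 : ⟪f' x - f' y, x - y⟫ = ⟪f' x, x - y⟫ - ⟪f' y, x - y⟫ := inner_sub_left _ _ _
  have c2 : L⁻¹ * ‖f' x - f' y‖ ^ 2 = 2 * (1 / (2 * L) * ‖f' x - f' y‖ ^ 2) := by
    field_simp
  linarith

/-- quadratic error bound implies gradient -/
lemma hasGradientAt_of_quad (φ : E → ℝ) (g x : E) (C : ℝ)
    (h : ∀ y, |φ y - φ x - ⟪g, y - x⟫| ≤ C * ‖y - x‖ ^ 2) :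
    HasGradientAt φ g x := by
  have h : ∀ y, |φ y - φ x - ⟪g, y - x⟫| ≤ |C| * ‖y - x‖ ^ 2 := fun y =>
    (h y).trans (mul_le_mul_of_nonneg_right (le_abs_self C) (sq_nonneg _))
  set C' := |C| with hC'def
  have hC : 0 ≤ C' := abs_nonneg C
  rw [hasGradientAt_iff_hasFDerivAt, hasFDerivAt_iff_isLittleO]
  rw [Asymptotics.isLittleO_iff]
  intro c hc
  have hcc : 0 < c / (C' + 1) := div_pos hc (by linarith)
  filter_upwards [Metric.ball_mem_nhds x hcc] with y hy
  have hd : ‖y - x‖ < c / (C' + 1) := by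
    rwa [Metric.mem_ball, dist_eq_norm] at hy
  have h1 := h y
  have h2 : C' * ‖y - x‖ ^ 2 ≤ c * ‖y - x‖ := by
    have hn : 0 ≤ ‖y - x‖ := norm_nonneg _
    have : C' * ‖y - x‖ ≤ c := by
      calc C' * ‖y - x‖ ≤ C' * (c / (C' + 1)) := by nlinarith
        _ ≤ c := by
          rw [mul_comm, div_mul_eq_mul_div, div_le_iff₀ (by linarith : (0:ℝ) < C' + 1)]
          nlinarith
    nlinarith
  calc ‖φ y - φ x - (toDual ℝ E) g (y - x)‖
      = |φ y - φ x - ⟪g, y - x⟫| := by rw [InnerProductSpace.toDual_apply_apply]; rfl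
    _ ≤ C' * ‖y - x‖ ^ 2 := h1
    _ ≤ c * ‖y - x‖ := h2

/-- gradient of the quadratic -/
lemma quad_grad (x w : E) (α : ℝ) (hα : 0 < α) :
    HasGradientAt (fun v => ‖v - x‖ ^ 2 / (2 * α)) (α⁻¹ • (w - x)) w := by
  apply hasGradientAt_of_quad _ _ _ (1 / (2 * α))
  intro y
  have expand : ‖y - x‖ ^ 2 = ‖y - w‖ ^ 2 + 2 * ⟪y - w, w - x⟫ + ‖w - x‖ ^ 2 := by
    have : y - x = (y - w) + (w - x) := by abel
    rw [this, ← real_inner_self_eq_norm_sq, ← real_inner_self_eq_norm_sq,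
      ← real_inner_self_eq_norm_sq, inner_add_add_self,
      real_inner_comm (w - x) (y - w)]
    ring
  have einner : ⟪α⁻¹ • (w - x), y - w⟫ = α⁻¹ * ⟪y - w, w - x⟫ := by
    rw [real_inner_smul_left, real_inner_comm]
  have : ‖y - x‖ ^ 2 / (2 * α) - ‖w - x‖ ^ 2 / (2 * α) - ⟪α⁻¹ • (w - x), y - w⟫
      = ‖y - w‖ ^ 2 / (2 * α) := by
    rw [einner, expand]
    field_simp
    ring
  rw [this, abs_of_nonneg (by positivity)]
  rw [div_le_iff₀ (by positivity : (0:ℝ) < 2 * α)]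
  have : 1 / (2 * α) * ‖y - w‖ ^ 2 * (2 * α) = ‖y - w‖ ^ 2 := by field_simp
  rw [this]

set_option maxHeartbeats 1000000

/-- For convex L-smooth f : ℝ^d → ℝ, α > 0, and z(x) a minimizer of
w ↦ f(w) + ‖w − x‖²/(2α), the Moreau envelope F(x) = f(z(x)) + ‖z(x) − x‖²/(2α)
is differentiable with ∇F(x) = (x − z(x))/α = ∇f(z(x)), and ∇F is
L/(1 + αL)-Lipschitz; in particular it is L-Lipschitz for any α > 0. -/
theorem moreau_envelope_smoothness_improved {d : ℕ}
    (f : EuclideanSpace ℝ (Fin d) → ℝ)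
    (f' : EuclideanSpace ℝ (Fin d) → EuclideanSpace ℝ (Fin d))
    (L α : ℝ) (hα : 0 < α)
    (hconv : ConvexOn ℝ Set.univ f)
    (hgrad : ∀ x, HasGradientAt f (f' x) x)
    (hlip : ∀ x y, ‖f' x - f' y‖ ≤ L * ‖x - y‖)
    (z : EuclideanSpace ℝ (Fin d) → EuclideanSpace ℝ (Fin d))
    (hz : ∀ x, IsMinOn (fun w => f w + ‖w - x‖ ^ 2 / (2 * α)) Set.univ (z x)) :
    (∀ x, HasGradientAt (fun x => f (z x) + ‖z x - x‖ ^ 2 / (2 * α))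
        (α⁻¹ • (x - z x)) x) ∧
    (∀ x, α⁻¹ • (x - z x) = f' (z x)) ∧
    (∀ x y, ‖α⁻¹ • (x - z x) - α⁻¹ • (y - z y)‖ ≤ (L / (1 + α * L)) * ‖x - y‖) ∧
    (∀ x y, ‖α⁻¹ • (x - z x) - α⁻¹ • (y - z y)‖ ≤ L * ‖x - y‖) := by
  -- Part 2: first-order optimality condition
  have part2 : ∀ x, α⁻¹ • (x - z x) = f' (z x) := by
    intro x
    have hq := quad_grad x (z x) α hα
    have hF : HasFDerivAt (fun w => f w + ‖w - x‖ ^ 2 / (2 * α))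
        (InnerProductSpace.toDual ℝ (EuclideanSpace ℝ (Fin d)) (f' (z x))
          + InnerProductSpace.toDual ℝ (EuclideanSpace ℝ (Fin d)) (α⁻¹ • (z x - x))) (z x) :=
      (hgrad (z x)).hasFDerivAt.add hq.hasFDerivAt
    have hmin : IsLocalMin (fun w => f w + ‖w - x‖ ^ 2 / (2 * α)) (z x) :=
      Filter.Eventually.of_forall fun w => by simpa using isMinOn_iff.mp (hz x) w (Set.mem_univ w)
    have h0 := hmin.hasFDerivAt_eq_zero hF
    rw [← map_add] at h0
    have h1 : f' (z x) + α⁻¹ • (z x - x) = 0 :=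
      (LinearIsometryEquiv.map_eq_zero_iff _).mp h0
    have h2 : α⁻¹ • (x - z x) = -(α⁻¹ • (z x - x)) := by
      rw [← smul_neg, neg_sub]
    rw [h2]
    exact neg_eq_of_add_eq_zero_left h1
  -- case L < 0 forces x = y
  have hneg : L < 0 → ∀ x y : EuclideanSpace ℝ (Fin d), x = y := by
    intro hL x y
    by_contra hne
    have h := hlip x y
    have hpos : 0 < ‖x - y‖ := by
      rw [norm_pos_iff, sub_ne_zero]; exact hne
    nlinarith [norm_nonneg (f' x - f' y)]
  -- Part 3
  have part3 : ∀ x y : EuclideanSpace ℝ (Fin d), ‖α⁻¹ • (x - z x) - α⁻¹ • (y - z y)‖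
      ≤ (L / (1 + α * L)) * ‖x - y‖ := by
    intro x y
    rw [part2 x, part2 y]
    rcases lt_trichotomy L 0 with hL | hL | hL
    · have := hneg hL x y
      subst this
      simp
    · subst hL
      have h := hlip (z x) (z y)
      have h0 : ‖f' (z x) - f' (z y)‖ = 0 := le_antisymm (by simpa using h) (norm_nonneg _)
      rw [h0]
      simp [mul_nonneg, norm_nonneg]
    · have h1αL : (0:ℝ) < 1 + α * L := by positivity
      have hco := coco f f' L hL hconv hgrad hlip (z x) (z y)
      set u := f' (z x) with hu
      set v := f' (z y) with hv
      have hxz : x - z x = α • u := by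
        have := part2 x
        rw [hu, ← this, smul_smul, mul_inv_cancel₀ hα.ne', one_smul]
      have hyz : y - z y = α • v := by
        have := part2 y
        rw [hv, ← this, smul_smul, mul_inv_cancel₀ hα.ne', one_smul]
      have key : x - y = (z x - z y) + α • (u - v) := by
        rw [smul_sub, ← hxz, ← hyz]; abel
      have hinner : ⟪u - v, x - y⟫ = ⟪u - v, z x - z y⟫ + α * ‖u - v‖ ^ 2 := by
        rw [key, inner_add_right, real_inner_smul_right, real_inner_self_eq_norm_sq]
      have hcs : ⟪u - v, x - y⟫ ≤ ‖u - v‖ * ‖x - y‖ := real_inner_le_norm _ _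
      have hmain : (L⁻¹ + α) * ‖u - v‖ ^ 2 ≤ ‖u - v‖ * ‖x - y‖ := by
        have := hco
        nlinarith [this, hinner, hcs]
      rcases eq_or_lt_of_le (norm_nonneg (u - v)) with hn | hn
      · rw [← hn]
        positivity
      · rw [div_mul_eq_mul_div, le_div_iff₀ h1αL]
        have h2 := mul_le_mul_of_nonneg_left hmain hL.le
        have hLi : L * L⁻¹ = 1 := mul_inv_cancel₀ hL.ne'
        nlinarith [h2, hLi, hn]
  -- Part 4
  have part4 : ∀ x y : EuclideanSpace ℝ (Fin d), ‖α⁻¹ • (x - z x) - α⁻¹ • (y - z y)‖ ≤ L * ‖x - y‖ := by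
    intro x y
    rcases lt_trichotomy L 0 with hL | hL | hL
    · have := hneg hL x y
      subst this
      simp
    · have h := part3 x y
      subst hL
      simpa using h
    · refine (part3 x y).trans (mul_le_mul_of_nonneg_right ?_ (norm_nonneg _))
      have h1αL : (1:ℝ) ≤ 1 + α * L := by nlinarith
      calc L / (1 + α * L) ≤ L / 1 := by
            apply div_le_div_of_nonneg_left hL.le (by norm_num) h1αL
        _ = L := div_one L
  -- Lipschitz bound with |L|
  have gLip : ∀ x y : EuclideanSpace ℝ (Fin d), ‖α⁻¹ • (x - z x) - α⁻¹ • (y - z y)‖ ≤ |L| * ‖x - y‖ := by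
    intro x y
    rcases lt_or_ge L 0 with hL | hL
    · have := hneg hL x y
      subst this
      simp
    · rw [abs_of_nonneg hL]
      exact part4 x y
  -- Part 1
  have part1 : ∀ x, HasGradientAt (fun x => f (z x) + ‖z x - x‖ ^ 2 / (2 * α))
      (α⁻¹ • (x - z x)) x := by
    have hup : ∀ a b : EuclideanSpace ℝ (Fin d), (f (z b) + ‖z b - b‖ ^ 2 / (2 * α))
        - (f (z a) + ‖z a - a‖ ^ 2 / (2 * α))
        ≤ ⟪α⁻¹ • (a - z a), b - a⟫ + ‖b - a‖ ^ 2 / (2 * α) := by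
      intro a b
      have hmin := isMinOn_iff.mp (hz b) (z a) (Set.mem_univ (z a))
      have expand : ‖z a - b‖ ^ 2
          = ‖z a - a‖ ^ 2 + 2 * ⟪z a - a, a - b⟫ + ‖a - b‖ ^ 2 := by
        have e : z a - b = (z a - a) + (a - b) := by abel
        rw [e, ← real_inner_self_eq_norm_sq, ← real_inner_self_eq_norm_sq,
          ← real_inner_self_eq_norm_sq, inner_add_add_self,
          real_inner_comm (a - b) (z a - a)]
        ring
      have einner : ⟪α⁻¹ • (a - z a), b - a⟫ = α⁻¹ * ⟪z a - a, a - b⟫ := by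
        rw [real_inner_smul_left]
        congr 1
        rw [show a - z a = -(z a - a) by abel, show b - a = -(a - b) by abel,
          inner_neg_neg]
      have enorm : ‖a - b‖ = ‖b - a‖ := norm_sub_rev _ _
      rw [expand, enorm] at hmin
      rw [einner]
      have harith : (‖z a - a‖ ^ 2 + 2 * ⟪z a - a, a - b⟫ + ‖b - a‖ ^ 2) / (2 * α)
          = ‖z a - a‖ ^ 2 / (2 * α) + α⁻¹ * ⟪z a - a, a - b⟫ + ‖b - a‖ ^ 2 / (2 * α) := by
        field_simp
      rw [harith] at hmin
      linarith
    intro x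
    apply hasGradientAt_of_quad _ _ _ (|L| + 1 / (2 * α))
    intro y
    have h1 := hup x y
    have h2 := hup y x
    set gx := α⁻¹ • (x - z x) with hgx
    set gy := α⁻¹ • (y - z y) with hgy
    have hlow' : ⟪gy, x - y⟫ = -⟪gy, y - x⟫ := by
      rw [← inner_neg_right]
      congr 1
      abel
    have hdiff : ⟪gy, y - x⟫ - ⟪gx, y - x⟫ = ⟪gy - gx, y - x⟫ :=
      (inner_sub_left _ _ _).symm
    have hg : ‖gy - gx‖ ≤ |L| * ‖y - x‖ := gLip y x
    have f1 : -(|L| * ‖y - x‖ * ‖y - x‖) ≤ ⟪gy - gx, y - x⟫ := by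
      have ha := abs_real_inner_le_norm (gy - gx) (y - x)
      have hb := mul_le_mul_of_nonneg_right hg (norm_nonneg (y - x))
      have hc := neg_abs_le ⟪gy - gx, y - x⟫
      linarith
    have henorm : ‖x - y‖ = ‖y - x‖ := norm_sub_rev _ _
    rw [henorm] at h2
    have hsq : ‖y - x‖ * ‖y - x‖ = ‖y - x‖ ^ 2 := (sq ‖y - x‖).symm
    have hpos : 0 ≤ |L| * ‖y - x‖ ^ 2 := by positivity
    have harr : 1 / (2 * α) * ‖y - x‖ ^ 2 = ‖y - x‖ ^ 2 / (2 * α) := by ring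
    show |f (z y) + ‖z y - y‖ ^ 2 / (2 * α) - (f (z x) + ‖z x - x‖ ^ 2 / (2 * α))
        - ⟪gx, y - x⟫| ≤ (|L| + 1 / (2 * α)) * ‖y - x‖ ^ 2
    rw [abs_le]
    constructor
    · linarith
    · linarith
  exact ⟨part1, part2, part3, part4⟩
end

section
/- Let f : ℝ^d → ℝ be L-smooth, let α > 0, fix x ∈ ℝ^d, and let z* ∈ ℝ^d satisfy the fixed-point equation z* = x − α∇f(z*). Define the inner-loop iterates z_0 = x and z_{j+1} = x − α∇f(z_j) for j ≥ 0. Then for every integer s ≥ 0, ‖∇f(z_s) − ∇f(z*)‖ ≤ (αL)^{s+1}·‖∇f(z*)‖. (When z* is the proximal point of x for f with parameter α, the vector ∇f(z*) = (x − z*)/α equals the Moreau-envelope gradient ∇F(x), so this bounds ‖∇f(z_s) − ∇F(x)‖ ≤ (αL)^{s+1}‖∇F(x)‖; the case s = 1 covers FO-MAML.) -/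
/-- For L-smooth f, α > 0, x fixed, z* with z* = x − α∇f(z*), and the
inner-loop iterates z₀ = x, z_{j+1} = x − α∇f(z_j), every s ≥ 0 satisfies
‖∇f(z_s) − ∇f(z*)‖ ≤ (αL)^{s+1}·‖∇f(z*)‖. -/
theorem inner_loop_gradient_approximation {d : ℕ}
    (f : EuclideanSpace ℝ (Fin d) → ℝ)
    (f' : EuclideanSpace ℝ (Fin d) → EuclideanSpace ℝ (Fin d))
    (L α : ℝ) (hL : 0 < L) (hα : 0 < α)
    (hgrad : ∀ x, HasGradientAt f (f' x) x)
    (hlip : ∀ x y, ‖f' x - f' y‖ ≤ L * ‖x - y‖)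
    (x zstar : EuclideanSpace ℝ (Fin d))
    (hzstar : zstar = x - α • f' zstar)
    (z : ℕ → EuclideanSpace ℝ (Fin d))
    (hz0 : z 0 = x)
    (hzrec : ∀ j : ℕ, z (j + 1) = x - α • f' (z j)) :
    ∀ s : ℕ, ‖f' (z s) - f' zstar‖ ≤ (α * L) ^ (s + 1) * ‖f' zstar‖ := by
  have key : ∀ s : ℕ, ‖z s - zstar‖ ≤ (α * L) ^ s * (α * ‖f' zstar‖) := by
    intro s
    induction s with
    | zero =>
      have : z 0 - zstar = α • f' zstar := by
        rw [hz0]; nth_rewrite 1 [hzstar]; abel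
      simp [this, norm_smul, abs_of_pos hα]
    | succ n ih =>
      have hstep : z (n + 1) - zstar = α • (f' zstar - f' (z n)) := by
        rw [hzrec]; nth_rewrite 1 [hzstar]
        rw [smul_sub]; abel
      calc ‖z (n + 1) - zstar‖ = α * ‖f' zstar - f' (z n)‖ := by
            rw [hstep, norm_smul, Real.norm_eq_abs, abs_of_pos hα]
        _ ≤ α * (L * ‖zstar - z n‖) := by
            exact mul_le_mul_of_nonneg_left (hlip _ _) hα.le
        _ = α * L * ‖z n - zstar‖ := by rw [norm_sub_rev]; ring
        _ ≤ α * L * ((α * L) ^ n * (α * ‖f' zstar‖)) :=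
            mul_le_mul_of_nonneg_left ih (by positivity)
        _ = (α * L) ^ (n + 1) * (α * ‖f' zstar‖) := by ring
  intro s
  calc ‖f' (z s) - f' zstar‖ ≤ L * ‖z s - zstar‖ := hlip _ _
    _ ≤ L * ((α * L) ^ s * (α * ‖f' zstar‖)) :=
        mul_le_mul_of_nonneg_left (key s) hL.le
    _ = (α * L) ^ (s + 1) * ‖f' zstar‖ := by ring
end

section
/- Fix integers n, τ ≥ 1 and let task losses f_1, …, f_n : ℝ^d → ℝ be convex and L-smooth. Let α > 0, and for each i let z_i : ℝ^d → ℝ^d map x to the unique minimizer of w ↦ f_i(w) + ‖w − x‖²/(2α); set ∇F_i(x) = (x − z_i(x))/α, F_i(x) = f_i(z_i(x)) + ‖z_i(x) − x‖²/(2α), and F = (1/n)·Σ_{i=1}^n F_i. Let x* ∈ ℝ^d satisfy Σ_{i=1}^n ∇F_i(x*) = 0, and let σ*² = (1/n)·Σ_{i=1}^n ‖∇F_i(x*)‖². Fix a point x ∈ ℝ^d, a real δ ≥ 0, and vectors g_1, …, g_n ∈ ℝ^d with ‖g_i − ∇F_i(x)‖ ≤ δ·‖∇F_i(x)‖ for every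 i. Then the uniform average over all tuples (i_1,…,i_τ) ∈ {1,…,n}^τ of ‖(1/τ)·Σ_{j=1}^τ g_{i_j}‖² is at most (1 + 2δ² + 2/τ)·4L·(F(x) − F(x*)) + 4·(1/τ + δ²)·σ*². -/
open Set Finset RealInnerProductSpace

section AMGNB

variable {E : Type*} [NormedAddCommGroup E] [InnerProductSpace ℝ E] [CompleteSpace E]




lemma amgnb_line_hasDerivAt (f : E → ℝ) (f' : E → E)
    (hgrad : ∀ p, HasGradientAt f (f' p) p) (x v : E) (t : ℝ) :
    HasDerivAt (fun s : ℝ => f (x + s • v)) ⟪f' (x + t • v), v⟫ t := by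
  have hline : HasDerivAt (fun s : ℝ => x + s • v) v t := by
    simpa using ((hasDerivAt_id t).smul_const v).const_add x
  have h := (hgrad (x + t • v)).hasFDerivAt.comp_hasDerivAt t hline
  simp [InnerProductSpace.toDual_apply_apply] at h
  exact h

lemma amgnb_subgrad (f : E → ℝ) (f' : E → E) (hconv : ConvexOn ℝ Set.univ f)
    (hgrad : ∀ p, HasGradientAt f (f' p) p) (x y : E) :
    f x + ⟪f' x, y - x⟫ ≤ f y := by
  rcases eq_or_ne y x with rfl | hne
  · simp
  set v := y - x with hv
  have hφconv : ConvexOn ℝ Set.univ (fun t : ℝ => f (x + t • v)) := by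
    refine ⟨convex_univ, ?_⟩
    intro a _ b _ μ ν hμ hν hμν
    have key : x + (μ • a + ν • b) • v = μ • (x + a • v) + ν • (x + b • v) := by
      have hx : x = μ • x + ν • x := by rw [← add_smul, hμν, one_smul]
      rw [smul_add, smul_add, smul_smul, smul_smul]
      rw [smul_eq_mul, smul_eq_mul, add_smul]
      nth_rewrite 1 [hx]
      abel
    simp only [key]
    exact hconv.2 (Set.mem_univ _) (Set.mem_univ _) hμ hν hμν
  have h0 : HasDerivAt (fun t : ℝ => f (x + t • v)) ⟪f' x, v⟫ 0 := by
    have := amgnb_line_hasDerivAt f f' hgrad x v 0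
    simpa using this
  have hs := hφconv.le_slope_of_hasDerivAt (Set.mem_univ (0:ℝ)) (Set.mem_univ (1:ℝ))
    one_pos h0
  rw [slope_def_field] at hs
  simp only [one_smul, zero_smul, add_zero, sub_zero, div_one] at hs
  have : x + v = y := by rw [hv]; abel
  rw [this] at hs
  linarith

lemma amgnb_descent (f : E → ℝ) (f' : E → E)
    (hgrad : ∀ p, HasGradientAt f (f' p) p) (L : ℝ) (hL : 0 < L)
    (hlip : ∀ a b, ‖f' a - f' b‖ ≤ L * ‖a - b‖) (x y : E) :
    f y ≤ f x + ⟪f' x, y - x⟫ + L / 2 * ‖y - x‖ ^ 2 := by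
  set v := y - x with hv
  set ψ : ℝ → ℝ := fun t => f (x + t • v) - t * ⟪f' x, v⟫ - L / 2 * t ^ 2 * ‖v‖ ^ 2 with hψ
  have hψd : ∀ t : ℝ, HasDerivAt ψ (⟪f' (x + t • v) - f' x, v⟫ - L * t * ‖v‖ ^ 2) t := by
    intro t
    have h1 := amgnb_line_hasDerivAt f f' hgrad x v t
    have h2 : HasDerivAt (fun s : ℝ => s * ⟪f' x, v⟫) ⟪f' x, v⟫ t := by
      simpa using (hasDerivAt_id t).mul_const ⟪f' x, v⟫
    have h3 : HasDerivAt (fun s : ℝ => L / 2 * s ^ 2 * ‖v‖ ^ 2) (L * t * ‖v‖ ^ 2) t := by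
      have := ((hasDerivAt_pow 2 t).const_mul (L / 2)).mul_const (‖v‖ ^ 2)
      exact this.congr_deriv (by push_cast; ring)
    have hcomb := (h1.sub h2).sub h3
    have heq : ⟪f' (x + t • v), v⟫ - ⟪f' x, v⟫ - L * t * ‖v‖ ^ 2 =
        ⟪f' (x + t • v) - f' x, v⟫ - L * t * ‖v‖ ^ 2 := by
      rw [inner_sub_left]
    exact heq ▸ hcomb
  have hcont : Continuous ψ := by
    rw [continuous_iff_continuousAt]
    exact fun t => (hψd t).differentiableAt.continuousAt
  have hanti : AntitoneOn ψ (Set.Icc (0:ℝ) 1) := by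
    apply antitoneOn_of_deriv_nonpos (convex_Icc 0 1) hcont.continuousOn
    · exact fun t _ => (hψd t).differentiableAt.differentiableWithinAt
    · intro t ht
      rw [interior_Icc] at ht
      rw [(hψd t).deriv]
      have h4 : ⟪f' (x + t • v) - f' x, v⟫ ≤ ‖f' (x + t • v) - f' x‖ * ‖v‖ :=
        real_inner_le_norm _ _
      have h5 : ‖f' (x + t • v) - f' x‖ ≤ L * ‖t • v‖ := by
        simpa using hlip (x + t • v) x
      have h6 : ‖t • v‖ = t * ‖v‖ := by
        rw [norm_smul, Real.norm_eq_abs, abs_of_pos ht.1]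
      rw [h6] at h5
      have h7 : ‖f' (x + t • v) - f' x‖ * ‖v‖ ≤ L * (t * ‖v‖) * ‖v‖ :=
        mul_le_mul_of_nonneg_right h5 (norm_nonneg v)
      nlinarith [h4, h7]
  have h10 := hanti (Set.left_mem_Icc.2 zero_le_one) (Set.right_mem_Icc.2 zero_le_one)
    zero_le_one
  simp only [hψ] at h10
  have hy : x + (1:ℝ) • v = y := by rw [one_smul, hv]; abel
  rw [hy] at h10
  simp only [zero_smul, add_zero] at h10
  nlinarith [h10]

lemma amgnb_cocoercive (f : E → ℝ) (f' : E → E) (hconv : ConvexOn ℝ Set.univ f)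
    (hgrad : ∀ p, HasGradientAt f (f' p) p) (L : ℝ) (hL : 0 < L)
    (hlip : ∀ a b, ‖f' a - f' b‖ ≤ L * ‖a - b‖) (x y : E) :
    ‖f' y - f' x‖ ^ 2 ≤ 2 * L * (f y - f x - ⟪f' x, y - x⟫) := by
  set G := f' y - f' x with hG
  set w := y - (1 / L) • G with hw
  have h1 := amgnb_subgrad f f' hconv hgrad x w
  have h2 := amgnb_descent f f' hgrad L hL hlip y w
  have hwy : w - y = -((1 / L) • G) := by rw [hw]; abel
  have hwx : w - x = (y - x) + (w - y) := by abel
  have e1 : ⟪f' x, w - x⟫ = ⟪f' x, y - x⟫ - (1 / L) * ⟪f' x, G⟫ := by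
    rw [hwx, inner_add_right, hwy, inner_neg_right, real_inner_smul_right]
    ring
  have e2 : ⟪f' y, w - y⟫ = -((1 / L) * ⟪f' y, G⟫) := by
    rw [hwy, inner_neg_right, real_inner_smul_right]
  have e3 : ‖w - y‖ ^ 2 = (1 / L) ^ 2 * ‖G‖ ^ 2 := by
    rw [hwy, norm_neg, norm_smul, Real.norm_eq_abs, mul_pow, sq_abs]
  have e4 : ⟪f' y, G⟫ - ⟪f' x, G⟫ = ‖G‖ ^ 2 := by
    rw [← inner_sub_left, ← hG, real_inner_self_eq_norm_sq]
  have hL' : L ≠ 0 := ne_of_gt hL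
  rw [e1] at h1
  rw [e2, e3] at h2
  have key : f x + ⟪f' x, y - x⟫ - (1 / L) * ⟪f' x, G⟫ ≤
      f y - (1 / L) * ⟪f' y, G⟫ + L / 2 * ((1 / L) ^ 2 * ‖G‖ ^ 2) := by linarith
  have expand : (1 / L) * ⟪f' y, G⟫ - (1 / L) * ⟪f' x, G⟫ = (1 / L) * ‖G‖ ^ 2 := by
    rw [← mul_sub, e4]
  have : (1 / L) * ‖G‖ ^ 2 - L / 2 * ((1 / L) ^ 2 * ‖G‖ ^ 2) ≤ f y - f x - ⟪f' x, y - x⟫ := by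
    linarith
  have hsimp : (1 / L) * ‖G‖ ^ 2 - L / 2 * ((1 / L) ^ 2 * ‖G‖ ^ 2) = ‖G‖ ^ 2 / (2 * L) := by
    field_simp
    ring
  rw [hsimp] at this
  rw [div_le_iff₀ (by positivity : (0:ℝ) < 2 * L)] at this
  linarith



lemma amgnb_sq_gradient (α : ℝ) (hα : 0 < α) (x w : E) :
    HasGradientAt (fun w' : E => ‖w' - x‖ ^ 2 / (2 * α)) (α⁻¹ • (w - x)) w := by
  have hsub : HasFDerivAt (fun w' : E => w' - x) (ContinuousLinearMap.id ℝ E) w :=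
    (hasFDerivAt_id w).sub_const x
  have hin := hsub.inner ℝ hsub
  have hsm := hin.const_smul ((2 * α)⁻¹ : ℝ)
  have hfun : ((2 * α)⁻¹ • fun w' : E => ⟪w' - x, w' - x⟫) =
      fun w' : E => ‖w' - x‖ ^ 2 / (2 * α) := by
    funext w'
    rw [Pi.smul_apply, real_inner_self_eq_norm_sq, smul_eq_mul, div_eq_inv_mul]
  rw [hfun] at hsm
  have hclm : (2 * α)⁻¹ • ((fderivInnerCLM ℝ ((w - x), (w - x))).comp
        ((ContinuousLinearMap.id ℝ E).prod (ContinuousLinearMap.id ℝ E))) =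
      InnerProductSpace.toDual ℝ E (α⁻¹ • (w - x)) := by
    apply ContinuousLinearMap.ext
    intro u
    simp only [ContinuousLinearMap.smul_apply, ContinuousLinearMap.coe_comp', Function.comp_apply,
      ContinuousLinearMap.prod_apply, ContinuousLinearMap.coe_id', id_eq,
      fderivInnerCLM_apply, InnerProductSpace.toDual_apply_apply, real_inner_smul_left, smul_eq_mul]
    rw [real_inner_comm u (w - x)]
    field_simp
    ring
  rw [hclm] at hsm
  simpa using hsm.hasGradientAt

lemma amgnb_prox_grad (f : E → ℝ) (f' : E → E) (hgrad : ∀ p, HasGradientAt f (f' p) p)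
    (α : ℝ) (hα : 0 < α) (x w : E)
    (hmin : IsMinOn (fun w' => f w' + ‖w' - x‖ ^ 2 / (2 * α)) Set.univ w) :
    f' w = α⁻¹ • (x - w) := by
  have h1 : HasFDerivAt (fun w' => f w' + ‖w' - x‖ ^ 2 / (2 * α))
      (InnerProductSpace.toDual ℝ E (f' w) + InnerProductSpace.toDual ℝ E (α⁻¹ • (w - x))) w :=
    (hgrad w).hasFDerivAt.add (amgnb_sq_gradient α hα x w).hasFDerivAt
  have hloc : IsLocalMin (fun w' => f w' + ‖w' - x‖ ^ 2 / (2 * α)) w :=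
    hmin.isLocalMin Filter.univ_mem
  have h0 := hloc.hasFDerivAt_eq_zero h1
  have h3 : InnerProductSpace.toDual ℝ E (f' w + α⁻¹ • (w - x)) = 0 := by
    rw [map_add]; exact h0
  have h2 : f' w + α⁻¹ • (w - x) = 0 :=
    (LinearIsometryEquiv.map_eq_zero_iff _).mp h3
  have h4 : f' w = -(α⁻¹ • (w - x)) := eq_neg_of_add_eq_zero_left h2
  rw [h4, ← smul_neg, neg_sub]



lemma amgnb_split {n m : ℕ} {M : Type*} [AddCommMonoid M] (G : (Fin (m+1) → Fin n) → M) :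
    ∑ I : Fin (m+1) → Fin n, G I = ∑ a : Fin n, ∑ r : Fin m → Fin n, G (Fin.cons a r) := by
  rw [← Equiv.sum_comp (Fin.consEquiv (fun _ : Fin (m+1) => Fin n)) G]
  rw [Fintype.sum_prod_type]
  rfl

lemma amgnb_card (n m : ℕ) : (Finset.univ : Finset (Fin m → Fin n)).card = n ^ m := by
  rw [Finset.card_univ, Fintype.card_fun, Fintype.card_fin, Fintype.card_fin]

lemma amgnb_R (n : ℕ) (g : Fin n → E) (m : ℕ) :
    ∑ I : Fin (m+1) → Fin n, (∑ j, g (I j)) = ((m+1) * n^m) • (∑ i, g i) := by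
  induction m with
  | zero =>
    rw [amgnb_split]
    simp [Fin.sum_univ_one]
  | succ m ih =>
    rw [amgnb_split]
    have hterm : ∀ (a : Fin n) (r : Fin (m+1) → Fin n),
        (∑ j : Fin (m+2), g ((Fin.cons a r : Fin (m+2) → Fin n) j)) = g a + ∑ j : Fin (m+1), g (r j) := by
      intro a r
      rw [Fin.sum_univ_succ]
      simp
    calc ∑ a : Fin n, ∑ r : Fin (m+1) → Fin n, (∑ j, g ((Fin.cons a r : Fin (m+2) → Fin n) j))
        = ∑ a : Fin n, ∑ r : Fin (m+1) → Fin n, (g a + ∑ j : Fin (m+1), g (r j)) := by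
          exact Finset.sum_congr rfl fun a _ => Finset.sum_congr rfl fun r _ => hterm a r
      _ = ∑ a : Fin n, ((n ^ (m+1)) • g a + ((m+1) * n^m) • (∑ i, g i)) := by
          refine Finset.sum_congr rfl fun a _ => ?_
          rw [Finset.sum_add_distrib, Finset.sum_const, amgnb_card, ih]
      _ = (n ^ (m+1)) • (∑ i, g i) + (n * ((m+1) * n^m)) • (∑ i, g i) := by
          rw [Finset.sum_add_distrib, Finset.sum_const, ← Finset.smul_sum, Finset.card_univ,
            Fintype.card_fin, smul_smul]
      _ = ((m+2) * n^(m+1)) • (∑ i, g i) := by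
          rw [← add_nsmul]
          congr 1
          ring

lemma amgnb_Q (n : ℕ) (hn : 1 ≤ n) (g : Fin n → E) (m : ℕ) :
    ∑ I : Fin (m+1) → Fin n, ‖∑ j, g (I j)‖^2
      = ((m+1 : ℝ) * (n:ℝ)^m) * (∑ i, ‖g i‖^2)
        + ((m+1 : ℝ) * (m : ℝ) * ((n:ℝ)^m / (n:ℝ))) * ‖∑ i, g i‖^2 := by
  have hn0 : (n:ℝ) ≠ 0 := by positivity
  induction m with
  | zero =>
    rw [amgnb_split]
    simp [Fin.sum_univ_one]
  | succ m ih =>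
    rw [amgnb_split]
    have hterm : ∀ (a : Fin n) (r : Fin (m+1) → Fin n),
        ‖∑ j : Fin (m+2), g ((Fin.cons a r : Fin (m+2) → Fin n) j)‖^2
          = ‖g a‖^2 + 2 * ⟪g a, ∑ j : Fin (m+1), g (r j)⟫ + ‖∑ j : Fin (m+1), g (r j)‖^2 := by
      intro a r
      rw [Fin.sum_univ_succ]
      simp only [Fin.cons_zero, Fin.cons_succ]
      exact norm_add_sq_real _ _
    rw [Finset.sum_congr rfl fun a _ => Finset.sum_congr rfl fun r _ => hterm a r]
    have T1 : ∑ a : Fin n, ∑ _r : Fin (m+1) → Fin n, ‖g a‖^2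
        = ((n:ℝ)^(m+1)) * ∑ i, ‖g i‖^2 := by
      simp only [Finset.sum_const, amgnb_card, nsmul_eq_mul]
      rw [← Finset.mul_sum]
      push_cast
      ring
    have T2 : ∑ a : Fin n, ∑ r : Fin (m+1) → Fin n, 2 * ⟪g a, ∑ j : Fin (m+1), g (r j)⟫
        = 2 * ((m+1 : ℝ) * (n:ℝ)^m) * ‖∑ i, g i‖^2 := by
      have : ∀ a : Fin n, ∑ r : Fin (m+1) → Fin n, 2 * ⟪g a, ∑ j : Fin (m+1), g (r j)⟫
          = 2 * ⟪g a, ((m+1) * n^m) • (∑ i, g i)⟫ := by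
        intro a
        rw [← Finset.mul_sum, ← inner_sum]
        rw [amgnb_R n g m]
      rw [Finset.sum_congr rfl fun a _ => this a]
      rw [← Finset.mul_sum, ← sum_inner]
      rw [← Nat.cast_smul_eq_nsmul ℝ, real_inner_smul_right, real_inner_self_eq_norm_sq]
      push_cast
      ring
    have T3 : ∑ _a : Fin n, ∑ r : Fin (m+1) → Fin n, ‖∑ j : Fin (m+1), g (r j)‖^2
        = (n:ℝ) * (((m+1 : ℝ) * (n:ℝ)^m) * (∑ i, ‖g i‖^2)
            + ((m+1 : ℝ) * (m : ℝ) * ((n:ℝ)^m / (n:ℝ))) * ‖∑ i, g i‖^2) := by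
      rw [Finset.sum_const, Finset.card_univ, Fintype.card_fin, nsmul_eq_mul, ih]
    have split2 : ∀ a : Fin n, ∑ r : Fin (m+1) → Fin n,
        (‖g a‖^2 + 2 * ⟪g a, ∑ j : Fin (m+1), g (r j)⟫ + ‖∑ j : Fin (m+1), g (r j)‖^2)
      = (∑ _r : Fin (m+1) → Fin n, ‖g a‖^2)
        + (∑ r : Fin (m+1) → Fin n, 2 * ⟪g a, ∑ j : Fin (m+1), g (r j)⟫)
        + (∑ r : Fin (m+1) → Fin n, ‖∑ j : Fin (m+1), g (r j)‖^2) := by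
      intro a
      rw [Finset.sum_add_distrib, Finset.sum_add_distrib]
    rw [Finset.sum_congr rfl fun a _ => split2 a, Finset.sum_add_distrib,
      Finset.sum_add_distrib]
    rw [T1, T2, T3]
    push_cast
    field_simp
    ring


lemma amgnb_two (a b : E) : ‖a + b‖^2 ≤ 2*‖a‖^2 + 2*‖b‖^2 := by
  nlinarith [norm_add_le a b, norm_nonneg (a+b), norm_nonneg a, norm_nonneg b,
    sq_nonneg (‖a‖ - ‖b‖), mul_self_le_mul_self (norm_nonneg (a+b)) (norm_add_le a b)]

lemma amgnb_jensen {n : ℕ} (v : Fin n → E) : ‖∑ i, v i‖^2 ≤ (n:ℝ) * ∑ i, ‖v i‖^2 := by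
  have h1 : ‖∑ i, v i‖^2 ≤ (∑ i, ‖v i‖)^2 :=
    pow_le_pow_left₀ (norm_nonneg _) (norm_sum_le _ _) 2
  have h2 := sq_sum_le_card_mul_sum_sq (s := (Finset.univ : Finset (Fin n)))
    (f := fun i => ‖v i‖)
  rw [Finset.card_univ, Fintype.card_fin] at h2
  linarith

end AMGNB
set_option maxHeartbeats 1000000 in
/-- Bound on the average squared norm of approximate meta-gradients
(Lemma 7 of the paper).  Task losses f_i are convex and L-smooth, α > 0, z_i(x)
the unique prox point, ∇F_i(x) = (x − z_i(x))/α,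
F_i(x) = f_i(z_i(x)) + ‖z_i(x) − x‖²/(2α), F = (1/n)ΣF_i, x* stationary, σ*² the
variance at x*.  For any x, δ ≥ 0 and vectors g_i with
‖g_i − ∇F_i(x)‖ ≤ δ‖∇F_i(x)‖, the uniform average over tuples (i_1,…,i_τ) of
‖(1/τ)Σ_j g_{i_j}‖² is at most
(1 + 2δ² + 2/τ)·4L·(F(x) − F(x*)) + 4·(1/τ + δ²)·σ*². -/
theorem average_meta_gradient_norm_bound {d : ℕ} (n τ : ℕ)
    (hn : 1 ≤ n) (hτ : 1 ≤ τ)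
    (L : ℝ) (hL : 0 < L)
    (f : Fin n → EuclideanSpace ℝ (Fin d) → ℝ)
    (f' : Fin n → EuclideanSpace ℝ (Fin d) → EuclideanSpace ℝ (Fin d))
    (hconv : ∀ i, ConvexOn ℝ Set.univ (f i))
    (hgrad : ∀ i x, HasGradientAt (f i) (f' i x) x)
    (hlip : ∀ i x y, ‖f' i x - f' i y‖ ≤ L * ‖x - y‖)
    (α : ℝ) (hα : 0 < α)
    (z : Fin n → EuclideanSpace ℝ (Fin d) → EuclideanSpace ℝ (Fin d))
    (hz : ∀ i x, IsMinOn (fun w => f i w + ‖w - x‖ ^ 2 / (2 * α)) Set.univ (z i x))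
    (hzu : ∀ i x w, IsMinOn (fun w' => f i w' + ‖w' - x‖ ^ 2 / (2 * α)) Set.univ w →
      w = z i x)
    (xstar : EuclideanSpace ℝ (Fin d))
    (hstar : ∑ i : Fin n, α⁻¹ • (xstar - z i xstar) = 0)
    (σs : ℝ) (hσ : σs = (1 / (n : ℝ)) * ∑ i : Fin n, ‖α⁻¹ • (xstar - z i xstar)‖ ^ 2)
    (F : EuclideanSpace ℝ (Fin d) → ℝ)
    (hF : ∀ x, F x = (1 / (n : ℝ)) * ∑ i : Fin n,
      (f i (z i x) + ‖z i x - x‖ ^ 2 / (2 * α)))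
    (x : EuclideanSpace ℝ (Fin d)) (δ : ℝ) (hδ : 0 ≤ δ)
    (g : Fin n → EuclideanSpace ℝ (Fin d))
    (hg : ∀ i, ‖g i - α⁻¹ • (x - z i x)‖ ≤ δ * ‖α⁻¹ • (x - z i x)‖) :
    (∑ I : Fin τ → Fin n, ‖(1 / (τ : ℝ)) • ∑ j : Fin τ, g (I j)‖ ^ 2) /
        (Fintype.card (Fin τ → Fin n) : ℝ) ≤
      (1 + 2 * δ ^ 2 + 2 / (τ : ℝ)) * (4 * L) * (F x - F xstar) +
        4 * (1 / (τ : ℝ) + δ ^ 2) * σs := by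

  have hn0 : (0:ℝ) < (n:ℝ) := Nat.cast_pos.mpr hn
  have hτ0 : (0:ℝ) < (τ:ℝ) := Nat.cast_pos.mpr hτ
  set u : Fin n → EuclideanSpace ℝ (Fin d) := fun i => α⁻¹ • (x - z i x) with hu
  set us : Fin n → EuclideanSpace ℝ (Fin d) := fun i => α⁻¹ • (xstar - z i xstar) with hus
  -- gradient of prox point
  have hfz : ∀ (i : Fin n) (y : EuclideanSpace ℝ (Fin d)),
      f' i (z i y) = α⁻¹ • (y - z i y) := fun i y =>
    amgnb_prox_grad (f i) (f' i) (hgrad i) α hα y (z i y) (hz i y)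
  -- per-task cocoercivity of the Moreau envelope
  have key : ∀ i : Fin n, ‖u i - us i‖^2 ≤
      2*L*((f i (z i x) + ‖z i x - x‖ ^ 2 / (2 * α))
        - (f i (z i xstar) + ‖z i xstar - xstar‖ ^ 2 / (2 * α)) - ⟪us i, x - xstar⟫) := by
    intro i
    have co := amgnb_cocoercive (f i) (f' i) (hconv i) (hgrad i) L hL (hlip i)
      (z i xstar) (z i x)
    rw [hfz i x, hfz i xstar] at co
    have hco : ‖u i - us i‖^2 ≤
        2*L*(f i (z i x) - f i (z i xstar) - ⟪us i, z i x - z i xstar⟫) := co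
    -- three-point inequality
    set a : EuclideanSpace ℝ (Fin d) := x - z i x with ha
    set b : EuclideanSpace ℝ (Fin d) := xstar - z i xstar with hb
    have hsplit : ⟪us i, x - xstar⟫ - ⟪us i, z i x - z i xstar⟫ = ⟪us i, a - b⟫ := by
      rw [← inner_sub_right]
      congr 1
      rw [ha, hb]
      abel
    have hub : ⟪us i, a - b⟫ = α⁻¹ * (⟪b, a⟫ - ‖b‖^2) := by
      have husb : us i = α⁻¹ • b := rfl
      rw [husb, real_inner_smul_left, inner_sub_right, real_inner_self_eq_norm_sq]
    have hnorm : 0 ≤ ‖a - b‖^2 := sq_nonneg _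
    have hexp : ‖a - b‖^2 = ‖a‖^2 - 2*⟪a, b⟫ + ‖b‖^2 := norm_sub_sq_real a b
    have hnorm' : 0 ≤ ‖a‖^2 - 2*⟪a, b⟫ + ‖b‖^2 := hexp ▸ hnorm
    have hin : ⟪us i, a - b⟫ ≤ ‖a‖^2/(2*α) - ‖b‖^2/(2*α) := by
      have hba : ⟪b, a⟫ = ⟪a, b⟫ := real_inner_comm a b
      have h2α : (0:ℝ) < 2*α := by positivity
      rw [hub, hba, inv_eq_one_div, div_mul_eq_mul_div, div_sub_div_same,
        div_le_div_iff₀ hα h2α]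
      nlinarith [hnorm']
    have hna : ‖z i x - x‖ = ‖a‖ := by rw [ha, norm_sub_rev]
    have hnb : ‖z i xstar - xstar‖ = ‖b‖ := by rw [hb, norm_sub_rev]
    rw [hna, hnb]
    have h2L : (0:ℝ) ≤ 2*L := by positivity
    have hmul := mul_le_mul_of_nonneg_left hin h2L
    have hre : 2*L*(f i (z i x) - f i (z i xstar) - ⟪us i, z i x - z i xstar⟫)
        = 2*L*(f i (z i x) + ‖a‖ ^ 2 / (2 * α) - (f i (z i xstar) + ‖b‖ ^ 2 / (2 * α))
            - ⟪us i, x - xstar⟫)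
          + (2*L*⟪us i, a - b⟫ - 2*L*(‖a‖^2/(2*α) - ‖b‖^2/(2*α))) := by
      rw [← hsplit]; ring
    linarith [hco, hmul, hre]
  -- summed cocoercivity
  have sumstar : ∑ i : Fin n, ⟪us i, x - xstar⟫ = 0 := by
    rw [← sum_inner, hstar, inner_zero_left]
  have sumkey : ∑ i : Fin n, ‖u i - us i‖^2 ≤ 2*L*((n:ℝ)*(F x - F xstar)) := by
    have h1 : ∑ i : Fin n, ‖u i - us i‖^2 ≤
        ∑ i : Fin n, 2*L*((f i (z i x) + ‖z i x - x‖ ^ 2 / (2 * α))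
          - (f i (z i xstar) + ‖z i xstar - xstar‖ ^ 2 / (2 * α)) - ⟪us i, x - xstar⟫) :=
      Finset.sum_le_sum fun i _ => key i
    have h2 : ∑ i : Fin n, 2*L*((f i (z i x) + ‖z i x - x‖ ^ 2 / (2 * α))
          - (f i (z i xstar) + ‖z i xstar - xstar‖ ^ 2 / (2 * α)) - ⟪us i, x - xstar⟫)
        = 2*L*((∑ i : Fin n, (f i (z i x) + ‖z i x - x‖ ^ 2 / (2 * α)))
          - (∑ i : Fin n, (f i (z i xstar) + ‖z i xstar - xstar‖ ^ 2 / (2 * α)))) := by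
      rw [← Finset.mul_sum]
      congr 1
      rw [Finset.sum_sub_distrib, Finset.sum_sub_distrib, sumstar, sub_zero]
    have h3 : (∑ i : Fin n, (f i (z i x) + ‖z i x - x‖ ^ 2 / (2 * α)))
          - (∑ i : Fin n, (f i (z i xstar) + ‖z i xstar - xstar‖ ^ 2 / (2 * α)))
        = (n:ℝ)*(F x - F xstar) := by
      rw [hF x, hF xstar, ← mul_sub, ← mul_assoc, mul_one_div_cancel hn0.ne', one_mul]
    rw [h2, h3] at h1
    exact h1
  -- abbreviations for the scalar quantities
  set A : ℝ := ∑ i : Fin n, ‖u i - us i‖^2 with hA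
  set P : ℝ := ∑ i : Fin n, ‖u i‖^2 with hP
  set Sg : ℝ := ∑ i : Fin n, ‖g i‖^2 with hSg
  set T : ℝ := ‖∑ i : Fin n, g i‖^2 with hT
  set Ss : ℝ := ∑ i : Fin n, ‖us i‖^2 with hSs
  have hA0 : 0 ≤ A := Finset.sum_nonneg fun i _ => sq_nonneg _
  have hSs0 : 0 ≤ Ss := Finset.sum_nonneg fun i _ => sq_nonneg _
  have hP0 : 0 ≤ P := Finset.sum_nonneg fun i _ => sq_nonneg _
  have hσ0 : 0 ≤ σs := by
    rw [hσ]
    apply mul_nonneg (by positivity)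
    exact Finset.sum_nonneg fun i _ => sq_nonneg _
  -- P ≤ 2A + 2Ss
  have hPle : P ≤ 2*A + 2*Ss := by
    have : ∀ i : Fin n, ‖u i‖^2 ≤ 2*‖u i - us i‖^2 + 2*‖us i‖^2 := by
      intro i
      have := amgnb_two (u i - us i) (us i)
      simpa using this
    calc P ≤ ∑ i : Fin n, (2*‖u i - us i‖^2 + 2*‖us i‖^2) := Finset.sum_le_sum fun i _ => this i
      _ = 2*A + 2*Ss := by rw [Finset.sum_add_distrib, ← Finset.mul_sum, ← Finset.mul_sum]
  -- Sg ≤ (2δ²+2) P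
  have hgi : ∀ i : Fin n, ‖g i - u i‖^2 ≤ δ^2 * ‖u i‖^2 := by
    intro i
    have h := hg i
    have := pow_le_pow_left₀ (norm_nonneg _) h 2
    rw [mul_pow] at this
    exact this
  have hSgle : Sg ≤ (2*δ^2 + 2) * P := by
    have : ∀ i : Fin n, ‖g i‖^2 ≤ 2*(δ^2*‖u i‖^2) + 2*‖u i‖^2 := by
      intro i
      have h2 := amgnb_two (g i - u i) (u i)
      simp only [sub_add_cancel] at h2
      nlinarith [hgi i]
    calc Sg ≤ ∑ i : Fin n, (2*(δ^2*‖u i‖^2) + 2*‖u i‖^2) := Finset.sum_le_sum fun i _ => this i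
      _ = (2*δ^2 + 2) * P := by
          rw [Finset.sum_add_distrib, ← Finset.mul_sum, ← Finset.mul_sum, ← Finset.mul_sum]
          ring
  -- T ≤ 2nδ²P + 2nA
  have hTle : T ≤ 2*(n:ℝ)*δ^2*P + 2*(n:ℝ)*A := by
    have hdecomp : ∑ i : Fin n, g i = (∑ i : Fin n, (g i - u i)) + ∑ i : Fin n, (u i - us i) := by
      rw [← Finset.sum_add_distrib]
      have : ∀ i : Fin n, g i - u i + (u i - us i) = g i - us i := fun i => by abel
      rw [Finset.sum_congr rfl fun i _ => this i]
      rw [Finset.sum_sub_distrib]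
      rw [show (∑ i : Fin n, us i) = 0 from hstar, sub_zero]
    have h1 : T ≤ 2*‖∑ i : Fin n, (g i - u i)‖^2 + 2*‖∑ i : Fin n, (u i - us i)‖^2 := by
      rw [hT, hdecomp]
      exact amgnb_two _ _
    have h2 : ‖∑ i : Fin n, (g i - u i)‖^2 ≤ (n:ℝ) * ∑ i : Fin n, ‖g i - u i‖^2 :=
      amgnb_jensen _
    have h3 : ‖∑ i : Fin n, (u i - us i)‖^2 ≤ (n:ℝ) * A := amgnb_jensen _
    have h4 : ∑ i : Fin n, ‖g i - u i‖^2 ≤ δ^2 * P := by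
      calc ∑ i : Fin n, ‖g i - u i‖^2 ≤ ∑ i : Fin n, δ^2*‖u i‖^2 :=
            Finset.sum_le_sum fun i _ => hgi i
        _ = δ^2 * P := by rw [← Finset.mul_sum]
    have h5 : (n:ℝ) * ∑ i : Fin n, ‖g i - u i‖^2 ≤ (n:ℝ) * (δ^2 * P) :=
      mul_le_mul_of_nonneg_left h4 hn0.le
    have h6 : ‖∑ i : Fin n, (g i - u i)‖^2 ≤ (n:ℝ) * (δ^2 * P) := h2.trans h5
    linarith [h1, h3, h6]
  -- compute the average using the combinatorial identity
  obtain ⟨m, rfl⟩ : ∃ m, τ = m + 1 := ⟨τ - 1, (Nat.succ_pred_eq_of_pos hτ).symm⟩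
  have hsm : ∀ I : Fin (m+1) → Fin n,
      ‖(1 / ((m+1 : ℕ) : ℝ)) • ∑ j : Fin (m+1), g (I j)‖ ^ 2
        = (1/((m+1:ℕ):ℝ))^2 * ‖∑ j : Fin (m+1), g (I j)‖^2 := by
    intro I
    rw [norm_smul, Real.norm_eq_abs, abs_of_pos (by positivity), mul_pow]
  have hcard : ((Fintype.card (Fin (m+1) → Fin n)) : ℝ) = (n:ℝ)^(m+1) := by
    rw [Fintype.card_fun, Fintype.card_fin, Fintype.card_fin]
    push_cast
    ring
  have hQ := amgnb_Q n hn g m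
  have havg : (∑ I : Fin (m+1) → Fin n, ‖(1 / ((m+1 : ℕ):ℝ)) • ∑ j : Fin (m+1), g (I j)‖ ^ 2) /
        ((Fintype.card (Fin (m+1) → Fin n)) : ℝ)
      = (1/((m+1:ℕ):ℝ)) * (Sg/(n:ℝ)) + ((m:ℝ)/((m+1:ℕ):ℝ)) * (T/(n:ℝ)^2) := by
    rw [Finset.sum_congr rfl fun I _ => hsm I, ← Finset.mul_sum, hQ, hcard, hSg, hT]
    have hnne : (n:ℝ) ≠ 0 := ne_of_gt hn0
    have hmne : ((m+1:ℕ):ℝ) ≠ 0 := by positivity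
    push_cast
    field_simp
    ring
  rw [havg]
  -- final arithmetic
  set τr : ℝ := ((m+1:ℕ):ℝ) with hτr
  have hτr1 : (1:ℝ) ≤ τr := by rw [hτr]; exact_mod_cast Nat.one_le_iff_ne_zero.mpr (Nat.succ_ne_zero m)
  have hτrpos : (0:ℝ) < τr := lt_of_lt_of_le one_pos hτr1
  have hmr : (m:ℝ) = τr - 1 := by rw [hτr]; push_cast; ring
  -- normalized quantities
  have hAn : A/(n:ℝ) ≤ 2*L*(F x - F xstar) := by
    rw [div_le_iff₀ hn0]
    calc A ≤ 2*L*((n:ℝ)*(F x - F xstar)) := sumkey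
      _ = 2*L*(F x - F xstar)*(n:ℝ) := by ring
  have hΔ0 : 0 ≤ F x - F xstar := by
    have := hA0
    nlinarith [hAn, div_nonneg hA0 (le_of_lt hn0)]
  have hSsσ : Ss = (n:ℝ) * σs := by
    rw [hσ, hSs, hus]
    field_simp
  -- final chain
  have goal2 : (1/τr) * (Sg/(n:ℝ)) + ((m:ℝ)/τr) * (T/(n:ℝ)^2) ≤
      (1 + 2*δ^2 + 2/τr) * (4*L) * (F x - F xstar) + 4*(1/τr + δ^2)*σs := by
    set Δ : ℝ := F x - F xstar with hΔ
    set aa : ℝ := A/(n:ℝ) with haa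
    set pp : ℝ := P/(n:ℝ) with hpp
    set sg : ℝ := Sg/(n:ℝ) with hsg
    set tt : ℝ := T/(n:ℝ)^2 with htt
    have haa0 : 0 ≤ aa := div_nonneg hA0 (le_of_lt hn0)
    have hpp0 : 0 ≤ pp := div_nonneg hP0 (le_of_lt hn0)
    have hP2 : pp ≤ 2*aa + 2*σs := by
      rw [hpp, haa, div_le_iff₀ hn0]
      have : (2*(A/(n:ℝ)) + 2*σs)*(n:ℝ) = 2*A + 2*((n:ℝ)*σs) := by field_simp
      rw [this, ← hSsσ]
      exact hPle
    have hS2 : sg ≤ (2*δ^2+2)*pp := by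
      rw [hsg, hpp, div_le_iff₀ hn0]
      have : (2*δ^2+2)*(P/(n:ℝ))*(n:ℝ) = (2*δ^2+2)*P := by field_simp
      rw [this]
      exact hSgle
    have hT2 : tt ≤ 2*δ^2*pp + 2*aa := by
      rw [htt, hpp, haa, div_le_iff₀ (by positivity : (0:ℝ) < (n:ℝ)^2)]
      have : (2*δ^2*(P/(n:ℝ)) + 2*(A/(n:ℝ)))*(n:ℝ)^2 = 2*(n:ℝ)*δ^2*P + 2*(n:ℝ)*A := by
        field_simp
      rw [this]
      exact hTle
    have htt0 : 0 ≤ tt := by rw [htt, hT]; positivity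
    have hm0 : (0:ℝ) ≤ (m:ℝ) := Nat.cast_nonneg m
    -- combine
    have step1 : (1/τr) * sg + ((m:ℝ)/τr) * tt ≤
        (1/τr) * ((2*δ^2+2)*(2*aa + 2*σs)) + ((m:ℝ)/τr) * (2*δ^2*(2*aa+2*σs) + 2*aa) := by
      have b1 : sg ≤ (2*δ^2+2)*(2*aa+2*σs) :=
        hS2.trans (mul_le_mul_of_nonneg_left hP2 (by positivity))
      have b2 : tt ≤ 2*δ^2*(2*aa+2*σs) + 2*aa := by
        have := mul_le_mul_of_nonneg_left hP2 (by positivity : (0:ℝ) ≤ 2*δ^2)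
        linarith [hT2]
      have c1 : (0:ℝ) ≤ 1/τr := by positivity
      have c2 : (0:ℝ) ≤ (m:ℝ)/τr := by positivity
      exact add_le_add (mul_le_mul_of_nonneg_left b1 c1) (mul_le_mul_of_nonneg_left b2 c2)
    refine le_trans step1 ?_
    rw [hmr]
    have haaΔ : aa ≤ 2*L*Δ := hAn
    -- reduce to polynomial inequality
    have expand : ((1/τr) * ((2*δ^2+2)*(2*aa + 2*σs)) + ((τr-1)/τr) * (2*δ^2*(2*aa+2*σs) + 2*aa)) * τr
        = (2*δ^2+2)*(2*aa+2*σs) + (τr-1)*(2*δ^2*(2*aa+2*σs)+2*aa) := by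
      field_simp
    have target : ((1 + 2*δ^2 + 2/τr) * (4*L) * Δ + 4*(1/τr + δ^2)*σs) * τr
        = (τr*(1+2*δ^2)+2) * (4*L) * Δ + (4 + 4*δ^2*τr)*σs := by
      field_simp
    rw [← mul_le_mul_iff_of_pos_right hτrpos, expand, target]
    have c0 : (0:ℝ) ≤ (4*δ^2+2)*τr+2 := by positivity
    have hLΔ : (0:ℝ) ≤ 2*L*Δ := by
      apply mul_nonneg _ hΔ0
      positivity
    have e1 : aa*((4*δ^2+2)*τr+2) ≤ (2*L*Δ)*((4*δ^2+2)*τr+2) :=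
      mul_le_mul_of_nonneg_right haaΔ c0
    have e2 : (2*L*Δ)*((4*δ^2+2)*τr+2) ≤ (2*L*Δ)*((4*δ^2+2)*τr+4) :=
      mul_le_mul_of_nonneg_left (by linarith) hLΔ
    linarith [e1, e2]
  exact goal2
end

section
/- Define f : ℝ → ℝ by f(x) = x⁴/4 − |x|³/3 + x²/6 for |x| ≤ 1 and f(x) = 2x²/3 − |x| + 5/12 for |x| > 1 (equivalently, f(x) = min{ x⁴/4 − |x|³/3 + x²/6, 2x²/3 − |x| + 5/12 }). Then f is convex on ℝ, twice continuously differentiable, its second derivative equals f''(x) = 3x² − 2|x| + 1/3 for |x| ≤ 1 and f''(x) = 4/3 for |x| > 1, it satisfies 0 ≤ f''(x) ≤ 4/3 for all x, and consequently f' is (4/3)-Lipschitz. -/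
open Set

private lemma hd4 (a b c d e x : ℝ) :
    HasDerivAt (fun x : ℝ => a * x ^ 4 + b * x ^ 3 + c * x ^ 2 + d * x + e)
      (4 * a * x ^ 3 + 3 * b * x ^ 2 + 2 * c * x + d) x := by
  have h1 := (hasDerivAt_pow 4 x).const_mul a
  have h2 := (hasDerivAt_pow 3 x).const_mul b
  have h3 := (hasDerivAt_pow 2 x).const_mul c
  have h4 := (hasDerivAt_id x).const_mul d
  have h5 := hasDerivAt_const x e
  have h := (((h1.add h2).add h3).add h4).add h5
  refine h.congr_deriv ?_
  push_cast
  ring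

private lemma hd4' {y x : ℝ} (a b c d e : ℝ) (h : y = 4 * a * x ^ 3 + 3 * b * x ^ 2 + 2 * c * x + d) :
    HasDerivAt (fun x : ℝ => a * x ^ 4 + b * x ^ 3 + c * x ^ 2 + d * x + e) y x :=
  h ▸ hd4 a b c d e x

private lemma myglue {f f₁ f₂ : ℝ → ℝ} {a y b c : ℝ} (hb : b < a) (hc : a < c)
    (h₁ : ∀ x, b < x → x ≤ a → f x = f₁ x)
    (h₂ : ∀ x, a ≤ x → x < c → f x = f₂ x)
    (d₁ : HasDerivAt f₁ y a) (d₂ : HasDerivAt f₂ y a) : HasDerivAt f y a := by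
  have u₁ : HasDerivWithinAt f y (Ioc b a) a :=
    (d₁.hasDerivWithinAt (s := Ioc b a)).congr (fun z hz => h₁ z hz.1 hz.2) (h₁ a hb le_rfl)
  have u₂ : HasDerivWithinAt f y (Ico a c) a :=
    (d₂.hasDerivWithinAt (s := Ico a c)).congr (fun z hz => h₂ z hz.1 hz.2) (h₂ a le_rfl hc)
  have m₁ : Ioc b a ∈ nhdsWithin a (Iic a) := by
    rw [← Set.Ioi_inter_Iic]
    exact Filter.inter_mem (mem_nhdsWithin_of_mem_nhds (Ioi_mem_nhds hb)) self_mem_nhdsWithin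
  have m₂ : Ico a c ∈ nhdsWithin a (Ici a) := by
    rw [← Set.Ici_inter_Iio]
    exact Filter.inter_mem self_mem_nhdsWithin (mem_nhdsWithin_of_mem_nhds (Iio_mem_nhds hc))
  have h := (u₁.mono_of_mem_nhdsWithin m₁).union (u₂.mono_of_mem_nhdsWithin m₂)
  rw [Set.Iic_union_Ici] at h
  exact hasDerivWithinAt_univ.mp h

private lemma myloc {f f₁ : ℝ → ℝ} {y x : ℝ} {s : Set ℝ} (hs : IsOpen s) (hx : x ∈ s)
    (h : ∀ z ∈ s, f z = f₁ z) (d : HasDerivAt f₁ y x) : HasDerivAt f y x :=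
  d.congr_of_eventuallyEq (Filter.eventually_of_mem (hs.mem_nhds hx) h)

noncomputable def gg (x : ℝ) : ℝ :=
  if |x| ≤ 1 then x ^ 3 - x * |x| + x / 3 else 4 * x / 3 - Real.sign x

noncomputable def hh (x : ℝ) : ℝ := min (3 * x ^ 2 - 2 * |x| + 1 / 3) (4 / 3)

private lemma hh_eq (x : ℝ) : hh x = if |x| ≤ 1 then 3 * x ^ 2 - 2 * |x| + 1 / 3 else 4 / 3 := by
  have h0 : 0 ≤ |x| := abs_nonneg x
  have hxx : x ^ 2 = |x| ^ 2 := (sq_abs x).symm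
  unfold hh
  split_ifs with h
  · apply min_eq_left; nlinarith [sq_nonneg (|x| - 1)]
  · push_neg at h
    apply min_eq_right; nlinarith

private lemma hh_bounds (x : ℝ) : 0 ≤ hh x ∧ hh x ≤ 4 / 3 := by
  refine ⟨?_, min_le_right _ _⟩
  rcases le_or_gt (3 * x ^ 2 - 2 * |x| + 1 / 3) (4 / 3) with h | h
  · rw [hh, min_eq_left h]
    have hxx : x ^ 2 = |x| ^ 2 := (sq_abs x).symm
    nlinarith [sq_nonneg (3 * |x| - 1)]
  · rw [hh, min_eq_right h.le]; norm_num

-- region descriptions of gg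
private lemma g1 : ∀ z : ℝ, z < -1 → gg z = 0 * z ^ 4 + 0 * z ^ 3 + 0 * z ^ 2 + (4/3) * z + 1 := by
  intro z hz
  rw [gg, if_neg (by rw [abs_of_neg (by linarith)]; linarith), Real.sign_of_neg (by linarith)]
  ring

private lemma g2 : ∀ z : ℝ, -1 ≤ z → z ≤ 0 → gg z = 0 * z ^ 4 + 1 * z ^ 3 + 1 * z ^ 2 + (1/3) * z + 0 := by
  intro z hz1 hz2
  rw [gg, if_pos (abs_le.2 ⟨hz1, by linarith⟩), abs_of_nonpos hz2]
  ring

private lemma g3 : ∀ z : ℝ, 0 ≤ z → z ≤ 1 → gg z = 0 * z ^ 4 + 1 * z ^ 3 + (-1) * z ^ 2 + (1/3) * z + 0 := by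
  intro z hz1 hz2
  rw [gg, if_pos (abs_le.2 ⟨by linarith, hz2⟩), abs_of_nonneg hz1]
  ring

private lemma g4 : ∀ z : ℝ, 1 < z → gg z = 0 * z ^ 4 + 0 * z ^ 3 + 0 * z ^ 2 + (4/3) * z + (-1) := by
  intro z hz
  rw [gg, if_neg (by rw [abs_of_pos (by linarith)]; linarith), Real.sign_of_pos (by linarith)]
  ring

-- region descriptions of f
section fregions
variable {f : ℝ → ℝ}
  (hf : ∀ x : ℝ, f x = if |x| ≤ 1 then x ^ 4 / 4 - |x| ^ 3 / 3 + x ^ 2 / 6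
      else 2 * x ^ 2 / 3 - |x| + 5 / 12)
include hf

private lemma e1 : ∀ z : ℝ, z < -1 → f z = 0 * z ^ 4 + 0 * z ^ 3 + (2/3) * z ^ 2 + 1 * z + 5/12 := by
  intro z hz
  rw [hf z, if_neg (by rw [abs_of_neg (by linarith)]; linarith),
    abs_of_neg (by linarith : z < 0)]
  ring

private lemma e2 : ∀ z : ℝ, -1 ≤ z → z ≤ 0 → f z = (1/4) * z ^ 4 + (1/3) * z ^ 3 + (1/6) * z ^ 2 + 0 * z + 0 := by
  intro z hz1 hz2
  rw [hf z, if_pos (abs_le.2 ⟨hz1, by linarith⟩), abs_of_nonpos hz2]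
  ring

private lemma e3 : ∀ z : ℝ, 0 ≤ z → z ≤ 1 → f z = (1/4) * z ^ 4 + (-(1/3)) * z ^ 3 + (1/6) * z ^ 2 + 0 * z + 0 := by
  intro z hz1 hz2
  rw [hf z, if_pos (abs_le.2 ⟨by linarith, hz2⟩), abs_of_nonneg hz1]
  ring

private lemma e4 : ∀ z : ℝ, 1 < z → f z = 0 * z ^ 4 + 0 * z ^ 3 + (2/3) * z ^ 2 + (-1) * z + 5/12 := by
  intro z hz
  rw [hf z, if_neg (by rw [abs_of_pos (by linarith)]; linarith),
    abs_of_pos (by linarith : (0:ℝ) < z)]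
  ring

private lemma e1' : ∀ z : ℝ, z ≤ -1 → f z = 0 * z ^ 4 + 0 * z ^ 3 + (2/3) * z ^ 2 + 1 * z + 5/12 := by
  intro z hz
  rcases eq_or_lt_of_le hz with rfl | hz'
  · rw [e2 hf (-1) le_rfl (by norm_num)]; norm_num
  · exact e1 hf z hz'

private lemma e4' : ∀ z : ℝ, 1 ≤ z → f z = 0 * z ^ 4 + 0 * z ^ 3 + (2/3) * z ^ 2 + (-1) * z + 5/12 := by
  intro z hz
  rcases eq_or_lt_of_le hz with rfl | hz1
  · rw [e3 hf 1 (by norm_num) le_rfl]; norm_num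
  · exact e4 hf z hz1

private lemma f_deriv (x : ℝ) : HasDerivAt f (gg x) x := by
  rcases lt_trichotomy x (-1) with h | h | h
  · exact myloc isOpen_Iio h (fun z hz => e1 hf z hz)
      (hd4' 0 0 (2/3) 1 (5/12) (by rw [g1 x h]; ring))
  · subst h
    have hv : gg (-1 : ℝ) = (-1/3 : ℝ) := by rw [g2 (-1) le_rfl (by norm_num)]; norm_num
    exact myglue (by norm_num : (-2:ℝ) < -1) (by norm_num : (-1:ℝ) < 0)
      (fun z _ hz2 => e1' hf z hz2)
      (fun z hz1 hz2 => e2 hf z hz1 hz2.le)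
      (hd4' 0 0 (2/3) 1 (5/12) (by rw [hv]; norm_num))
      (hd4' (1/4) (1/3) (1/6) 0 0 (by rw [hv]; norm_num))
  · rcases lt_trichotomy x 0 with h0 | h0 | h0
    · exact myloc isOpen_Ioo (⟨h, h0⟩ : x ∈ Ioo (-1:ℝ) 0)
        (fun z hz => e2 hf z hz.1.le hz.2.le)
        (hd4' (1/4) (1/3) (1/6) 0 0 (by rw [g2 x h.le h0.le]; ring))
    · subst h0
      have hv : gg (0 : ℝ) = (0 : ℝ) := by rw [g2 0 (by norm_num) le_rfl]; norm_num
      exact myglue (by norm_num : (-1:ℝ) < 0) (by norm_num : (0:ℝ) < 1)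
        (fun z hz1 hz2 => e2 hf z hz1.le hz2)
        (fun z hz1 hz2 => e3 hf z hz1 hz2.le)
        (hd4' (1/4) (1/3) (1/6) 0 0 (by rw [hv]; norm_num))
        (hd4' (1/4) (-(1/3)) (1/6) 0 0 (by rw [hv]; norm_num))
    · rcases lt_trichotomy x 1 with h1 | h1 | h1
      · exact myloc isOpen_Ioo (⟨h0, h1⟩ : x ∈ Ioo (0:ℝ) 1)
          (fun z hz => e3 hf z hz.1.le hz.2.le)
          (hd4' (1/4) (-(1/3)) (1/6) 0 0 (by rw [g3 x h0.le h1.le]; ring))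
      · subst h1
        have hv : gg (1 : ℝ) = (1/3 : ℝ) := by rw [g3 1 (by norm_num) le_rfl]; norm_num
        exact myglue (by norm_num : (0:ℝ) < 1) (by norm_num : (1:ℝ) < 2)
          (fun z hz1 hz2 => e3 hf z hz1.le hz2)
          (fun z hz1 _ => e4' hf z hz1)
          (hd4' (1/4) (-(1/3)) (1/6) 0 0 (by rw [hv]; norm_num))
          (hd4' 0 0 (2/3) (-1) (5/12) (by rw [hv]; norm_num))
      · exact myloc isOpen_Ioi h1 (fun z hz => e4 hf z hz)
          (hd4' 0 0 (2/3) (-1) (5/12) (by rw [g4 x h1]; ring))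

end fregions

private lemma g1' : ∀ z : ℝ, z ≤ -1 → gg z = 0 * z ^ 4 + 0 * z ^ 3 + 0 * z ^ 2 + (4/3) * z + 1 := by
  intro z hz
  rcases eq_or_lt_of_le hz with rfl | hz'
  · rw [g2 (-1) le_rfl (by norm_num)]; norm_num
  · exact g1 z hz'

private lemma g4' : ∀ z : ℝ, 1 ≤ z → gg z = 0 * z ^ 4 + 0 * z ^ 3 + 0 * z ^ 2 + (4/3) * z + (-1) := by
  intro z hz
  rcases eq_or_lt_of_le hz with rfl | hz'
  · rw [g3 1 (by norm_num) le_rfl]; norm_num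
  · exact g4 z hz'

private lemma k1 : ∀ z : ℝ, z ≤ -1 → hh z = (4/3 : ℝ) := by
  intro z hz
  rw [hh_eq]
  split_ifs with h
  · have hz1 : z = -1 := le_antisymm hz (by have := (abs_le.1 h).1; linarith)
    subst hz1; norm_num
  · rfl

private lemma k2 : ∀ z : ℝ, -1 ≤ z → z ≤ 0 → hh z = 3 * z ^ 2 + 2 * z + 1/3 := by
  intro z hz1 hz2
  rw [hh_eq, if_pos (abs_le.2 ⟨hz1, by linarith⟩), abs_of_nonpos hz2]
  ring

private lemma k3 : ∀ z : ℝ, 0 ≤ z → z ≤ 1 → hh z = 3 * z ^ 2 - 2 * z + 1/3 := by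
  intro z hz1 hz2
  rw [hh_eq, if_pos (abs_le.2 ⟨by linarith, hz2⟩), abs_of_nonneg hz1]

private lemma k4 : ∀ z : ℝ, 1 ≤ z → hh z = (4/3 : ℝ) := by
  intro z hz
  rw [hh_eq]
  split_ifs with h
  · have hz1 : z = 1 := le_antisymm (by have := (abs_le.1 h).2; linarith) hz
    subst hz1; norm_num
  · rfl

private lemma gg_deriv (x : ℝ) : HasDerivAt gg (hh x) x := by
  rcases lt_trichotomy x (-1) with h | h | h
  · exact myloc isOpen_Iio h (fun z hz => g1 z hz)
      (hd4' 0 0 0 (4/3) 1 (by rw [k1 x h.le]; ring))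
  · subst h
    have hv : hh (-1 : ℝ) = (4/3 : ℝ) := k1 (-1) le_rfl
    exact myglue (by norm_num : (-2:ℝ) < -1) (by norm_num : (-1:ℝ) < 0)
      (fun z _ hz2 => g1' z hz2)
      (fun z hz1 hz2 => g2 z hz1 hz2.le)
      (hd4' 0 0 0 (4/3) 1 (by rw [hv]; norm_num))
      (hd4' 0 1 1 (1/3) 0 (by rw [hv]; norm_num))
  · rcases lt_trichotomy x 0 with h0 | h0 | h0
    · exact myloc isOpen_Ioo (⟨h, h0⟩ : x ∈ Ioo (-1:ℝ) 0)
        (fun z hz => g2 z hz.1.le hz.2.le)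
        (hd4' 0 1 1 (1/3) 0 (by rw [k2 x h.le h0.le]; ring))
    · subst h0
      have hv : hh (0 : ℝ) = (1/3 : ℝ) := by rw [k2 0 (by norm_num) le_rfl]; norm_num
      exact myglue (by norm_num : (-1:ℝ) < 0) (by norm_num : (0:ℝ) < 1)
        (fun z hz1 hz2 => g2 z hz1.le hz2)
        (fun z hz1 hz2 => g3 z hz1 hz2.le)
        (hd4' 0 1 1 (1/3) 0 (by rw [hv]; norm_num))
        (hd4' 0 1 (-1) (1/3) 0 (by rw [hv]; norm_num))
    · rcases lt_trichotomy x 1 with h1 | h1 | h1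
      · exact myloc isOpen_Ioo (⟨h0, h1⟩ : x ∈ Ioo (0:ℝ) 1)
          (fun z hz => g3 z hz.1.le hz.2.le)
          (hd4' 0 1 (-1) (1/3) 0 (by rw [k3 x h0.le h1.le]; ring))
      · subst h1
        have hv : hh (1 : ℝ) = (4/3 : ℝ) := k4 1 le_rfl
        exact myglue (by norm_num : (0:ℝ) < 1) (by norm_num : (1:ℝ) < 2)
          (fun z hz1 hz2 => g3 z hz1.le hz2)
          (fun z hz1 _ => g4' z hz1)
          (hd4' 0 1 (-1) (1/3) 0 (by rw [hv]; norm_num))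
          (hd4' 0 0 0 (4/3) (-1) (by rw [hv]; norm_num))
      · exact myloc isOpen_Ioi h1 (fun z hz => g4 z hz)
          (hd4' 0 0 0 (4/3) (-1) (by rw [k4 x h1.le]; ring))

private lemma hh_cont : Continuous hh :=
  (((continuous_const.mul (continuous_pow 2)).sub
    (continuous_const.mul continuous_abs)).add continuous_const).min continuous_const

/-- The counterexample function f(x) = x⁴/4 − |x|³/3 + x²/6 for
|x| ≤ 1, f(x) = 2x²/3 − |x| + 5/12 for |x| > 1, is convex, twice continuously
differentiable, has second derivative f''(x) = 3x² − 2|x| + 1/3 for |x| ≤ 1 and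
4/3 for |x| > 1, satisfies 0 ≤ f'' ≤ 4/3, and hence f' is (4/3)-Lipschitz. -/
theorem counterexample_function_properties (f : ℝ → ℝ)
    (hf : ∀ x : ℝ, f x = if |x| ≤ 1 then x ^ 4 / 4 - |x| ^ 3 / 3 + x ^ 2 / 6
      else 2 * x ^ 2 / 3 - |x| + 5 / 12) :
    (∀ x : ℝ, f x = min (x ^ 4 / 4 - |x| ^ 3 / 3 + x ^ 2 / 6)
        (2 * x ^ 2 / 3 - |x| + 5 / 12)) ∧
    ConvexOn ℝ Set.univ f ∧
    ContDiff ℝ 2 f ∧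
    (∀ x : ℝ, deriv (deriv f) x =
      if |x| ≤ 1 then 3 * x ^ 2 - 2 * |x| + 1 / 3 else 4 / 3) ∧
    (∀ x : ℝ, 0 ≤ deriv (deriv f) x ∧ deriv (deriv f) x ≤ 4 / 3) ∧
    (∀ x y : ℝ, |deriv f x - deriv f y| ≤ 4 / 3 * |x - y|) := by
  have hdf : deriv f = gg := funext fun x => (f_deriv hf x).deriv
  have hdg : deriv gg = hh := funext fun x => (gg_deriv x).deriv
  have hddf : deriv (deriv f) = hh := by rw [hdf, hdg]
  have hmin : ∀ x : ℝ, f x = min (x ^ 4 / 4 - |x| ^ 3 / 3 + x ^ 2 / 6)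
      (2 * x ^ 2 / 3 - |x| + 5 / 12) := by
    intro x
    have h0 : 0 ≤ |x| := abs_nonneg x
    have hxx : x ^ 2 = |x| ^ 2 := (sq_abs x).symm
    rw [hf x]
    split_ifs with h
    · refine (min_eq_left ?_).symm
      nlinarith [mul_nonneg (mul_nonneg (pow_nonneg (sub_nonneg.2 h) 2) (sub_nonneg.2 h))
        (by linarith : (0:ℝ) ≤ 3 * |x| + 5)]
    · push_neg at h
      refine (min_eq_right ?_).symm
      nlinarith [mul_nonneg (mul_nonneg (pow_nonneg (sub_nonneg.2 h.le) 2) (sub_nonneg.2 h.le))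
        (by linarith : (0:ℝ) ≤ 3 * |x| + 5)]
  have hdiff : Differentiable ℝ f := fun x => (f_deriv hf x).differentiableAt
  have hdiffg : Differentiable ℝ gg := fun x => (gg_deriv x).differentiableAt
  have hcd1g : ContDiff ℝ 1 gg := contDiff_one_iff_deriv.2 ⟨hdiffg, hdg ▸ hh_cont⟩
  have hcd2 : ContDiff ℝ 2 f := by
    rw [show (2 : WithTop ℕ∞) = 1 + 1 by norm_num, contDiff_succ_iff_deriv]
    exact ⟨hdiff, by simp, hdf ▸ hcd1g⟩
  refine ⟨hmin, ?_, hcd2, ?_, ?_, ?_⟩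
  · refine convexOn_univ_of_deriv2_nonneg hdiff (hdf ▸ hdiffg) fun x => ?_
    have : deriv^[2] f x = deriv (deriv f) x := by
      simp [Function.iterate_succ, Function.comp]
    rw [this, hddf]
    exact (hh_bounds x).1
  · intro x
    rw [hddf, hh_eq]
  · intro x
    rw [hddf]
    exact hh_bounds x
  · intro x y
    rw [hdf]
    have hb : ∀ z : ℝ, z ∈ Set.univ → ‖deriv gg z‖ ≤ 4 / 3 := by
      intro z _
      rw [Real.norm_eq_abs, hdg]
      exact abs_le.2 ⟨by linarith [(hh_bounds z).1], (hh_bounds z).2⟩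
    have h := Convex.norm_image_sub_le_of_norm_deriv_le (f := gg)
      (fun z _ => hdiffg z) hb convex_univ (Set.mem_univ y) (Set.mem_univ x)
    simpa [Real.norm_eq_abs] using h
end

section
/- Let α > 0. For every x ∈ ℝ there is a unique real number z(x) satisfying (1+α)·z(x) − α·sin(z(x)) = x. The resulting function z : ℝ → ℝ is differentiable with z'(x) = 1/(1 + α − α·cos(z(x))) for all x, and it satisfies the growth bound |z(x)| ≥ |x|/(1+α) − 1 for all x ∈ ℝ; in particular, z is unbounded. (For f(x) = x²/2 + cos x, this z is the iMAML implicit proximal point, i.e., z(x) = x − α f'(z(x)).) -/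
section aux

variable (α : ℝ)

private lemma gderiv (hα : 0 < α) (w : ℝ) :
    HasDerivAt (fun w => (1 + α) * w - α * Real.sin w) (1 + α - α * Real.cos w) w := by
  have h1 : HasDerivAt (fun w : ℝ => (1 + α) * w) (1 + α) w := by
    simpa using (hasDerivAt_id w).const_mul (1 + α)
  have h2 : HasDerivAt (fun w : ℝ => α * Real.sin w) (α * Real.cos w) w :=
    (Real.hasDerivAt_sin w).const_mul α
  exact h1.sub h2

private lemma gderiv_pos (hα : 0 < α) (w : ℝ) : 0 < 1 + α - α * Real.cos w := by
  nlinarith [Real.cos_le_one w, Real.neg_one_le_cos w]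

end aux

/-- For α > 0 and every x there is a unique z(x) with
(1+α)z(x) − α·sin(z(x)) = x; the resulting z is differentiable with
z'(x) = 1/(1 + α − α·cos(z(x))), satisfies |z(x)| ≥ |x|/(1+α) − 1 (hence z is
unbounded), and satisfies the iMAML fixed-point equation z(x) = x − α f'(z(x))
for f(x) = x²/2 + cos x (f'(t) = t − sin t). -/
theorem imaml_prox_point_exists_unique (α : ℝ) (hα : 0 < α) :
    (∀ x : ℝ, ∃! w : ℝ, (1 + α) * w - α * Real.sin w = x) ∧
    ∀ z : ℝ → ℝ, (∀ x, (1 + α) * z x - α * Real.sin (z x) = x) →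
      (∀ x, HasDerivAt z (1 / (1 + α - α * Real.cos (z x))) x) ∧
      (∀ x, |x| / (1 + α) - 1 ≤ |z x|) ∧
      (∀ M : ℝ, ∃ x : ℝ, M < |z x|) ∧
      (∀ x, z x = x - α * (z x - Real.sin (z x))) := by
  set g : ℝ → ℝ := fun w => (1 + α) * w - α * Real.sin w with hg
  have hα1 : (0:ℝ) < 1 + α := by linarith
  have hderiv : ∀ w, HasDerivAt g (1 + α - α * Real.cos w) w := gderiv α hα
  have hmono : StrictMono g := by
    apply strictMono_of_deriv_pos
    intro w
    rw [(hderiv w).deriv]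
    exact gderiv_pos α hα w
  have hcont : Continuous g := by
    fun_prop
  have hsurj : Function.Surjective g := by
    intro x
    obtain ⟨w, hw, hwx⟩ := intermediate_value_Icc (a := (x - α)/(1+α)) (b := (x + α)/(1+α))
      (by gcongr <;> linarith) hcont.continuousOn
      (show x ∈ Set.Icc (g ((x - α)/(1+α))) (g ((x + α)/(1+α))) by
        constructor
        · have : g ((x - α)/(1+α)) = (x - α) - α * Real.sin ((x - α)/(1+α)) := by
            simp only [hg]; field_simp
          rw [this]
          nlinarith [Real.neg_one_le_sin ((x - α)/(1+α))]
        · have : g ((x + α)/(1+α)) = (x + α) - α * Real.sin ((x + α)/(1+α)) := by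
            simp only [hg]; field_simp
          rw [this]
          nlinarith [Real.sin_le_one ((x + α)/(1+α))])
    exact ⟨w, hwx⟩
  constructor
  · intro x
    obtain ⟨w, hw⟩ := hsurj x
    exact ⟨w, hw, fun y hy => hmono.injective (hy.trans hw.symm)⟩
  · intro z hz
    -- z is continuous, being the inverse of the order iso g
    have e : ℝ ≃o ℝ := StrictMono.orderIsoOfSurjective g hmono hsurj
    have hzeq : z = ⇑(StrictMono.orderIsoOfSurjective g hmono hsurj).symm := by
      funext x
      apply hmono.injective
      have h1 : g ((StrictMono.orderIsoOfSurjective g hmono hsurj).symm x) = x :=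
        (StrictMono.orderIsoOfSurjective g hmono hsurj).apply_symm_apply x
      exact (hz x).trans h1.symm
    have hzcont : Continuous z := by
      rw [hzeq]; exact OrderIso.continuous _
    have hbound : ∀ x, |x| / (1 + α) - 1 ≤ |z x| := by
      intro x
      have h := hz x
      have habs : |x| ≤ (1 + α) * |z x| + α := by
        calc |x| = |(1 + α) * z x - α * Real.sin (z x)| := by rw [h]
        _ ≤ |(1 + α) * z x| + |α * Real.sin (z x)| := abs_sub _ _
        _ ≤ (1 + α) * |z x| + α := by
            rw [abs_mul, abs_mul, abs_of_pos hα1, abs_of_pos hα]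
            have := Real.abs_sin_le_one (z x)
            nlinarith
      rw [div_sub' hα1.ne', div_le_iff₀ hα1]
      nlinarith
    refine ⟨?_, hbound, ?_, ?_⟩
    · intro x
      have hne : 1 + α - α * Real.cos (z x) ≠ 0 := (gderiv_pos α hα (z x)).ne'
      have := HasDerivAt.of_local_left_inverse (f := g) (g := z) (a := x)
        hzcont.continuousAt (hderiv (z x)) hne
        (Filter.Eventually.of_forall hz)
      simpa [one_div] using this
    · intro M
      refine ⟨(1 + α) * (|M| + 2), ?_⟩
      have hb := hbound ((1 + α) * (|M| + 2))
      have hxval : |(1 + α) * (|M| + 2)| / (1 + α) - 1 = |M| + 1 := by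
        rw [abs_of_nonneg (by positivity)]
        field_simp; ring
      rw [hxval] at hb
      have := le_abs_self M
      linarith
    · intro x
      have := hz x
      nlinarith [Real.sin_le_one (z x)]
end

section
/- Let f(x) = x²/2 + cos x, let α > 0, and let z : ℝ → ℝ be the function determined uniquely by (1+α)·z(x) − α·sin(z(x)) = x. Then φ = f ∘ z is twice differentiable with φ'(x) = (z(x) − sin z(x))/(1 + α − α·cos z(x)) and φ''(x) = (1 + 2α − α·z(x)·sin z(x) − (1+2α)·cos z(x)) / (1 + α − α·cos z(x))³ for all x, and φ'' is unbounded: for every M > 0 there exists x ∈ ℝ with |φ''(x)| > M. -/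
open Real


/-- For f(x) = x²/2 + cos x, α > 0, and z : ℝ → ℝ determined by
(1+α)z(x) − α·sin(z(x)) = x, the meta-objective φ = f ∘ z is twice differentiable
with φ'(x) = (z(x) − sin z(x))/(1 + α − α cos z(x)) and
φ''(x) = (1 + 2α − α z(x) sin z(x) − (1+2α) cos z(x))/(1 + α − α cos z(x))³,
and φ'' is unbounded. -/
theorem imaml_objective_second_derivative_unbounded (α : ℝ) (hα : 0 < α)
    (z : ℝ → ℝ) (hz : ∀ x : ℝ, (1 + α) * z x - α * Real.sin (z x) = x) :
    (∀ x, HasDerivAt (fun t => (z t) ^ 2 / 2 + Real.cos (z t))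
        ((z x - Real.sin (z x)) / (1 + α - α * Real.cos (z x))) x) ∧
    (∀ x, HasDerivAt (deriv (fun t => (z t) ^ 2 / 2 + Real.cos (z t)))
        ((1 + 2 * α - α * z x * Real.sin (z x) - (1 + 2 * α) * Real.cos (z x)) /
          (1 + α - α * Real.cos (z x)) ^ 3) x) ∧
    (∀ M : ℝ, 0 < M → ∃ x : ℝ,
      M < |(1 + 2 * α - α * z x * Real.sin (z x) - (1 + 2 * α) * Real.cos (z x)) /
        (1 + α - α * Real.cos (z x)) ^ 3|) := by
  set g : ℝ → ℝ := fun w => (1 + α) * w - α * Real.sin w with hgdef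
  have hgd : ∀ w, HasDerivAt g (1 + α - α * Real.cos w) w := fun w => by
    simpa [Pi.sub_def] using ((hasDerivAt_id w).const_mul (1 + α)).sub
      ((Real.hasDerivAt_sin w).const_mul α)
  have hDpos : ∀ w : ℝ, 0 < 1 + α - α * Real.cos w := fun w => by
    nlinarith [Real.cos_le_one w]
  have hgmono : StrictMono g :=
    strictMono_of_deriv_pos (fun w => by rw [(hgd w).deriv]; exact hDpos w)
  have hgz : ∀ x, g (z x) = x := fun x => hz x
  have hzmono : StrictMono z := fun x y hxy =>
    hgmono.lt_iff_lt.mp (by rw [hgz, hgz]; exact hxy)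
  have hzsurj : Function.Surjective z := fun w =>
    ⟨g w, hgmono.injective (hgz (g w))⟩
  have hzcont : Continuous z :=
    hzmono.monotone.continuous_of_surjective hzsurj
  have hz' : ∀ x, HasDerivAt z (1 + α - α * Real.cos (z x))⁻¹ x := fun x =>
    HasDerivAt.of_local_left_inverse hzcont.continuousAt (hgd (z x))
      (ne_of_gt (hDpos (z x))) (Filter.Eventually.of_forall hgz)
  -- first derivative
  have hφ' : ∀ x, HasDerivAt (fun t => (z t) ^ 2 / 2 + Real.cos (z t))
      ((z x - Real.sin (z x)) / (1 + α - α * Real.cos (z x))) x := fun x => by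
    have hf : HasDerivAt (fun w : ℝ => w ^ 2 / 2 + Real.cos w)
        (z x - Real.sin (z x)) (z x) := by
      have := ((hasDerivAt_pow 2 (z x)).div_const 2).add (Real.hasDerivAt_cos (z x))
      simpa [mul_comm, Pi.add_def, sub_eq_add_neg] using this
    have := hf.comp x (hz' x)
    simpa [div_eq_mul_inv, Function.comp_def] using this
  have hderiv : deriv (fun t => (z t) ^ 2 / 2 + Real.cos (z t)) =
      fun x => (z x - Real.sin (z x)) / (1 + α - α * Real.cos (z x)) :=
    funext fun x => (hφ' x).deriv
  refine ⟨hφ', ?_, ?_⟩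
  · intro x
    rw [hderiv]
    have hN : HasDerivAt (fun t => z t - Real.sin (z t))
        ((1 - Real.cos (z x)) * (1 + α - α * Real.cos (z x))⁻¹) x := by
      have hs : HasDerivAt (fun t => Real.sin (z t))
          (Real.cos (z x) * (1 + α - α * Real.cos (z x))⁻¹) x :=
        (Real.hasDerivAt_sin (z x)).comp x (hz' x)
      simpa [sub_mul, one_mul, Pi.sub_def] using (hz' x).sub hs
    have hDen : HasDerivAt (fun t => 1 + α - α * Real.cos (z t))
        (α * Real.sin (z x) * (1 + α - α * Real.cos (z x))⁻¹) x := by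
      have hc : HasDerivAt (fun t => Real.cos (z t))
          (-Real.sin (z x) * (1 + α - α * Real.cos (z x))⁻¹) x :=
        (Real.hasDerivAt_cos (z x)).comp x (hz' x)
      have := (hasDerivAt_const x (1 + α)).sub (hc.const_mul α)
      simpa [mul_comm, mul_assoc, mul_left_comm, Pi.sub_def] using this
    have hne := ne_of_gt (hDpos (z x))
    have hdiv := hN.div hDen hne
    have hsc : Real.sin (z x) ^ 2 + Real.cos (z x) ^ 2 = 1 :=
      Real.sin_sq_add_cos_sq (z x)
    have key : ((1 - Real.cos (z x)) * (1 + α - α * Real.cos (z x))⁻¹ *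
          (1 + α - α * Real.cos (z x)) -
        (z x - Real.sin (z x)) * (α * Real.sin (z x) * (1 + α - α * Real.cos (z x))⁻¹)) /
          (1 + α - α * Real.cos (z x)) ^ 2 =
        (1 + 2 * α - α * z x * Real.sin (z x) - (1 + 2 * α) * Real.cos (z x)) /
          (1 + α - α * Real.cos (z x)) ^ 3 := by
      field_simp
      congr 1
      linear_combination α * hsc
    rw [← key]
    exact hdiv
  · intro M hM
    obtain ⟨n, hn⟩ := exists_nat_gt ((1 + 2 * α + M * (1 + α) ^ 3) / α)
    set u : ℝ := π / 2 + n * (2 * π) with hu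
    have hsin : Real.sin u = 1 := by
      rw [hu, Real.sin_add_nat_mul_two_pi, Real.sin_pi_div_two]
    have hcos : Real.cos u = 0 := by
      rw [hu, Real.cos_add_nat_mul_two_pi, Real.cos_pi_div_two]
    refine ⟨g u, ?_⟩
    have hzu : z (g u) = u := hgmono.injective (hgz (g u))
    rw [hzu, hsin, hcos]
    have hun : (n : ℝ) ≤ u := by
      have h3 : (3:ℝ) ≤ π := Real.pi_gt_three.le
      have hn0 : (0:ℝ) ≤ n := Nat.cast_nonneg n
      have h6 := mul_le_mul_of_nonneg_left h3 hn0
      rw [hu]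
      linarith
    have hαu : 1 + 2 * α + M * (1 + α) ^ 3 < α * u := by
      have : (1 + 2 * α + M * (1 + α) ^ 3) / α < u := lt_of_lt_of_le hn hun
      calc 1 + 2 * α + M * (1 + α) ^ 3
          = α * ((1 + 2 * α + M * (1 + α) ^ 3) / α) := by field_simp
        _ < α * u := by exact (mul_lt_mul_iff_right₀ hα).mpr this
    have h1α : (0:ℝ) < (1 + α) ^ 3 := by positivity
    have e1 : (1 + α - α * (0:ℝ)) ^ 3 = (1 + α) ^ 3 := by ring
    have e2 : 1 + 2 * α - α * u * 1 - (1 + 2 * α) * 0 = 1 + 2 * α - α * u := by ring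
    rw [e1, e2, abs_div, abs_of_pos h1α, lt_div_iff₀ h1α]
    have hneg : 1 + 2 * α - α * u < 0 := by nlinarith
    rw [abs_of_neg hneg]
    nlinarith
end
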